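/- arXiv:1411.2360 — 4 statements merged into one kernel-verified Lean document; each statement's English description precedes it below -/
import Mathlib

section
/- Let (w₀,w₁,w₂) ∈ ℤ³ be a primitive vector (i.e. gcd(w₀,w₁,w₂) = 1 and (w₀,w₁,w₂) ≠ (0,0,0)) and let U₀, U₁, U₂ ≥ 1 be real numbers. Then the number of primitive vectors (u₀,u₁,u₂) ∈ ℤ³ satisfying |u_i| ≤ U_i for i ∈ {0,1,2} and u₀w₀ + u₁w₁ + u₂w₂ = 0 is at most 12π · U₀U₁U₂ / max{|w₀|U₀, |w₁|U₁, |w₂|U₂} + 4. -/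
/-!
Rescale the last two coordinates of a solution `u` to the point `(u₁/U₁, u₂/U₂)` of the square
`[-1, 1]²`. If `u ≠ ±v` are primitive solutions, then `u × v` is a nonzero integer multiple of the
primitive vector `w` (both are orthogonal to `u` and `v`), so the rescaled points span a
parallelogram of area at least `|w₀| / (U₁U₂)`. Since they have norm at most `2`, points in the
closed upper half plane then have arguments at distance at least `|w₀| / (4U₁U₂)` in `[0, π]`,
which leaves room for at most `4πU₁U₂ / |w₀| + 1` of them; every solution is `±` one whose
rescaled point lies in the upper half plane. Permuting the coordinates cyclically, this is
applied to the index `i` maximising `|wᵢ|Uᵢ`.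
-/

open Real

/-- A vector in `ℤ³` is primitive if the gcd of its three coordinates is `1`. -/
def IsPrimitiveVec (w : ℤ × ℤ × ℤ) : Prop :=
  Int.gcd w.1 (Int.gcd w.2.1 w.2.2) = 1

open Matrix

section CrossProduct

variable {R : Type*} [CommRing R]

theorem eq_smul_of_cross_eq_zero {x w c : Fin 3 → R} (hx : x ⬝ᵥ w = 1) (h : w ⨯₃ c = 0) :
    c = (x ⬝ᵥ c) • w := by
  have := cross_cross_eq_smul_sub_smul' x w c
  rw [h, dotProduct_comm w x, hx, one_smul, map_zero] at this
  exact (sub_eq_zero.mp this.symm).symm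

theorem cross_eq_smul_of_dotProduct_eq_zero {x w u v : Fin 3 → R} (hx : x ⬝ᵥ w = 1)
    (hu : u ⬝ᵥ w = 0) (hv : v ⬝ᵥ w = 0) : u ⨯₃ v = (x ⬝ᵥ u ⨯₃ v) • w := by
  refine eq_smul_of_cross_eq_zero hx ?_
  rw [cross_cross_eq_smul_sub_smul', dotProduct_comm w v, hv, hu, zero_smul, zero_smul, sub_zero]

end CrossProduct

theorem Int.eq_or_eq_neg_of_cross_eq_zero {x y u v : Fin 3 → ℤ} (hx : x ⬝ᵥ u = 1)
    (hy : y ⬝ᵥ v = 1) (h : u ⨯₃ v = 0) : v = u ∨ v = -u := by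
  have hv : v = (x ⬝ᵥ v) • u := eq_smul_of_cross_eq_zero hx h
  have hu : u = (y ⬝ᵥ u) • v :=
    eq_smul_of_cross_eq_zero hy (by rw [← cross_anticomm, h, neg_zero])
  have hunit : (x ⬝ᵥ v) * (y ⬝ᵥ u) = 1 := by
    have := congrArg (x ⬝ᵥ ·) hu
    rw [hv, dotProduct_smul, dotProduct_smul, hx, smul_eq_mul, smul_eq_mul, mul_one] at this
    rw [mul_comm, this]
  rcases Int.eq_one_or_neg_one_of_mul_eq_one hunit with h1 | h1
  · left; rw [hv, h1, one_smul]
  · right; rw [hv, h1, neg_one_smul]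

def toVec3 (u : ℤ × ℤ × ℤ) : Fin 3 → ℤ := ![u.1, u.2.1, u.2.2]

theorem toVec3_injective : Function.Injective toVec3 := by
  intro u v h
  have h0 := congrFun h 0
  have h1 := congrFun h 1
  have h2 := congrFun h 2
  simp only [toVec3] at h0 h1 h2
  simp_all [Prod.ext_iff]

@[simp]
theorem toVec3_neg (u : ℤ × ℤ × ℤ) : toVec3 (-u) = -toVec3 u := by
  ext i; fin_cases i <;> rfl

@[simp]
theorem toVec3_dotProduct_toVec3 (u w : ℤ × ℤ × ℤ) :
    toVec3 u ⬝ᵥ toVec3 w = u.1 * w.1 + u.2.1 * w.2.1 + u.2.2 * w.2.2 := by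
  simp [toVec3]
  ring

theorem toVec3_cross_toVec3_zero (u v : ℤ × ℤ × ℤ) :
    (toVec3 u ⨯₃ toVec3 v) 0 = u.2.1 * v.2.2 - u.2.2 * v.2.1 := by
  simp [toVec3, cross_apply]

theorem IsPrimitiveVec.exists_dotProduct_eq_one {w : ℤ × ℤ × ℤ} (h : IsPrimitiveVec w) :
    ∃ x, x ⬝ᵥ toVec3 w = 1 := by
  obtain ⟨a, b, c⟩ := w
  obtain ⟨A, B, hA⟩ : ∃ A B : ℤ, (Int.gcd a (Int.gcd b c) : ℤ) = a * A + Int.gcd b c * B :=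
    ⟨_, _, Int.gcd_eq_gcd_ab a (Int.gcd b c)⟩
  obtain ⟨X, Y, hX⟩ : ∃ X Y : ℤ, (Int.gcd b c : ℤ) = b * X + c * Y :=
    ⟨_, _, Int.gcd_eq_gcd_ab b c⟩
  rw [IsPrimitiveVec] at h
  rw [h, Nat.cast_one] at hA
  refine ⟨![A, B * X, B * Y], ?_⟩
  simp [toVec3]
  linear_combination -hA - B * hX

theorem IsPrimitiveVec.ne_zero {w : ℤ × ℤ × ℤ} (h : IsPrimitiveVec w) : w ≠ 0 := by
  rintro rfl; simp [IsPrimitiveVec] at h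

@[simp]
theorem isPrimitiveVec_neg {u : ℤ × ℤ × ℤ} : IsPrimitiveVec (-u) ↔ IsPrimitiveVec u := by
  simp [IsPrimitiveVec]

theorem abs_fst_le_abs_cross {w u v : ℤ × ℤ × ℤ} (hw : IsPrimitiveVec w)
    (hu : IsPrimitiveVec u) (hv : IsPrimitiveVec v)
    (huw : u.1 * w.1 + u.2.1 * w.2.1 + u.2.2 * w.2.2 = 0)
    (hvw : v.1 * w.1 + v.2.1 * w.2.1 + v.2.2 * w.2.2 = 0) (hvu : v ≠ u) (hvu' : v ≠ -u) :
    |w.1| ≤ |u.2.1 * v.2.2 - u.2.2 * v.2.1| := by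
  obtain ⟨x, hx⟩ := hw.exists_dotProduct_eq_one
  obtain ⟨y, hy⟩ := hu.exists_dotProduct_eq_one
  obtain ⟨z, hz⟩ := hv.exists_dotProduct_eq_one
  set k := x ⬝ᵥ toVec3 u ⨯₃ toVec3 v
  have hk : toVec3 u ⨯₃ toVec3 v = k • toVec3 w :=
    cross_eq_smul_of_dotProduct_eq_zero hx (by simpa using huw) (by simpa using hvw)
  have hk0 : k ≠ 0 := by
    intro hk0
    rw [hk0, zero_smul] at hk
    rcases Int.eq_or_eq_neg_of_cross_eq_zero hy hz hk with h | h
    · exact hvu (toVec3_injective h)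
    · exact hvu' (toVec3_injective (by rw [h, toVec3_neg]))
  have h0 := congrFun hk 0
  rw [toVec3_cross_toVec3_zero] at h0
  rw [h0]
  simp only [toVec3, Pi.smul_apply, smul_eq_mul, Matrix.cons_val_zero, abs_mul]
  exact le_mul_of_one_le_left (abs_nonneg _) (Int.one_le_abs hk0)

theorem ncard_le_div_add_one_of_separated {α : Type*} {s : Set α} (f : α → ℝ) {a b c : ℝ}
    (hab : a ≤ b) (hc : 0 < c) (hf : ∀ x ∈ s, f x ∈ Set.Icc a b)
    (hsep : ∀ x ∈ s, ∀ y ∈ s, x ≠ y → c ≤ |f x - f y|) :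
    (s.ncard : ℝ) ≤ (b - a) / c + 1 := by
  let n : α → ℕ := fun x => ⌊(f x - a) / c⌋₊
  have hmaps : ∀ x ∈ s, n x ∈ Set.Iic ⌊(b - a) / c⌋₊ := fun x hx =>
    Nat.floor_le_floor (by gcongr; exact (hf x hx).2)
  have hinj : Set.InjOn n s := by
    intro x hx y hy hxy
    by_contra hne
    have hnonneg : ∀ z ∈ s, 0 ≤ (f z - a) / c := fun z hz =>
      div_nonneg (sub_nonneg.mpr (hf z hz).1) hc.le
    have hlt : |(f x - a) / c - (f y - a) / c| < 1 := by
      refine Int.abs_sub_lt_one_of_floor_eq_floor ?_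
      rw [← Int.natCast_floor_eq_floor (hnonneg x hx), ← Int.natCast_floor_eq_floor (hnonneg y hy)]
      exact congrArg _ hxy
    rw [← sub_div, sub_sub_sub_cancel_right, abs_div, abs_of_pos hc, div_lt_one hc] at hlt
    exact (hsep x hx y hy hne).not_gt hlt
  have hcard := Set.ncard_le_ncard_of_injOn n hmaps hinj
  rw [Set.ncard_Iic_nat] at hcard
  have hfloor : (⌊(b - a) / c⌋₊ : ℝ) ≤ (b - a) / c :=
    Nat.floor_le (div_nonneg (sub_nonneg.mpr hab) hc.le)
  calc (s.ncard : ℝ) ≤ (⌊(b - a) / c⌋₊ + 1 : ℕ) := by exact_mod_cast hcard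
    _ ≤ (b - a) / c + 1 := by push_cast; linarith

theorem Complex.im_conj_mul_eq_norm_mul_norm_mul_sin (z w : ℂ) :
    ((starRingEnd ℂ) z * w).im = ‖z‖ * ‖w‖ * Real.sin (w.arg - z.arg) := by
  simp only [Complex.mul_im, Complex.conj_re, Complex.conj_im, Real.sin_sub]
  rw [← Complex.norm_mul_cos_arg z, ← Complex.norm_mul_sin_arg z, ← Complex.norm_mul_cos_arg w,
    ← Complex.norm_mul_sin_arg w]
  ring

theorem ncard_le_of_abs_im_conj_mul_ge {α : Type*} {s : Set α} (g : α → ℂ) {r δ : ℝ}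
    (hr : 0 < r) (hδ : 0 < δ) (hnorm : ∀ x ∈ s, ‖g x‖ ≤ r) (him : ∀ x ∈ s, 0 ≤ (g x).im)
    (hsep : ∀ x ∈ s, ∀ y ∈ s, x ≠ y → δ ≤ |((starRingEnd ℂ) (g x) * g y).im|) :
    (s.ncard : ℝ) ≤ π * r ^ 2 / δ + 1 := by
  have hcount := ncard_le_div_add_one_of_separated (fun x => (g x).arg) pi_pos.le
    (div_pos hδ (pow_pos hr 2))
    (fun x hx => ⟨Complex.arg_nonneg_iff.mpr (him x hx), Complex.arg_le_pi _⟩) ?_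
  · rwa [sub_zero, div_div_eq_mul_div] at hcount
  intro x hx y hy hxy
  rw [div_le_iff₀ (pow_pos hr 2)]
  calc δ ≤ |((starRingEnd ℂ) (g x) * g y).im| := hsep x hx y hy hxy
    _ = ‖g x‖ * ‖g y‖ * |Real.sin ((g y).arg - (g x).arg)| := by
      rw [Complex.im_conj_mul_eq_norm_mul_norm_mul_sin, abs_mul, abs_of_nonneg (by positivity)]
    _ ≤ r * r * |(g y).arg - (g x).arg| := by
      exact mul_le_mul (mul_le_mul (hnorm x hx) (hnorm y hy) (norm_nonneg _) hr.le)
        Real.abs_sin_le_abs (abs_nonneg _) (by positivity)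
    _ = |(g x).arg - (g y).arg| * r ^ 2 := by rw [abs_sub_comm]; ring

def IsUpperHalf (u : ℤ × ℤ × ℤ) : Prop :=
  0 < u.2.2 ∨ u.2.2 = 0 ∧ 0 < u.2.1

theorem IsUpperHalf.not_neg {u : ℤ × ℤ × ℤ} (h : IsUpperHalf u) : ¬IsUpperHalf (-u) := by
  simp only [IsUpperHalf, Prod.snd_neg, Prod.fst_neg] at h ⊢
  omega

open Pointwise in
theorem ncard_le_two_mul_ncard_isUpperHalf {S : Set (ℤ × ℤ × ℤ)} (hS : S.Finite)
    (hneg : ∀ u ∈ S, -u ∈ S) (hne : ∀ u ∈ S, u.2.1 ≠ 0 ∨ u.2.2 ≠ 0) :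
    S.ncard ≤ 2 * {u ∈ S | IsUpperHalf u}.ncard := by
  set T := {u ∈ S | IsUpperHalf u}
  have hsub : S ⊆ T ∪ -T := by
    intro u hu
    by_cases h : IsUpperHalf u
    · exact Or.inl ⟨hu, h⟩
    · refine Or.inr ⟨hneg u hu, ?_⟩
      have := hne u hu
      simp only [IsUpperHalf, Prod.snd_neg, Prod.fst_neg] at h ⊢
      omega
  have hfin : T.Finite := hS.subset (Set.sep_subset _ _)
  calc S.ncard ≤ (T ∪ -T).ncard := Set.ncard_le_ncard hsub (hfin.union hfin.neg)
    _ ≤ T.ncard + (-T).ncard := Set.ncard_union_le _ _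
    _ = 2 * T.ncard := by rw [Set.ncard_neg, two_mul]

def primSolutions (w : ℤ × ℤ × ℤ) (U₀ U₁ U₂ : ℝ) : Set (ℤ × ℤ × ℤ) :=
  {u | IsPrimitiveVec u ∧ (|u.1| : ℝ) ≤ U₀ ∧ (|u.2.1| : ℝ) ≤ U₁ ∧ (|u.2.2| : ℝ) ≤ U₂ ∧
    u.1 * w.1 + u.2.1 * w.2.1 + u.2.2 * w.2.2 = 0}

theorem finite_setOf_abs_le (U : ℝ) : {x : ℤ | (|x| : ℝ) ≤ U}.Finite := by
  refine (Set.finite_Icc (-⌈U⌉) ⌈U⌉).subset fun x hx => ?_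
  have hx' : |(x : ℝ)| ≤ U := by simpa using hx
  obtain ⟨h₁, h₂⟩ := abs_le.mp (hx'.trans (Int.le_ceil U))
  exact ⟨by exact_mod_cast h₁, by exact_mod_cast h₂⟩

section primSolutions

variable {w : ℤ × ℤ × ℤ} {U₀ U₁ U₂ : ℝ}

theorem primSolutions_finite : (primSolutions w U₀ U₁ U₂).Finite :=
  ((finite_setOf_abs_le U₀).prod ((finite_setOf_abs_le U₁).prod (finite_setOf_abs_le U₂))).subset
    fun _ hu => ⟨hu.2.1, hu.2.2.1, hu.2.2.2.1⟩

theorem neg_mem_primSolutions {u : ℤ × ℤ × ℤ} (hu : u ∈ primSolutions w U₀ U₁ U₂) :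
    -u ∈ primSolutions w U₀ U₁ U₂ := by
  obtain ⟨hp, h₀, h₁, h₂, huw⟩ := hu
  refine ⟨isPrimitiveVec_neg.mpr hp, by simpa using h₀, by simpa using h₁, by simpa using h₂, ?_⟩
  simp only [Prod.fst_neg, Prod.snd_neg]
  linear_combination -huw

theorem ncard_primSolutions_le (hw : IsPrimitiveVec w) (hw₁ : w.1 ≠ 0) (hU₁ : 0 < U₁)
    (hU₂ : 0 < U₂) :
    ((primSolutions w U₀ U₁ U₂).ncard : ℝ) ≤ 8 * π * (U₁ * U₂) / |(w.1 : ℝ)| + 2 := by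
  set S := primSolutions w U₀ U₁ U₂
  have hne : ∀ u ∈ S, u.2.1 ≠ 0 ∨ u.2.2 ≠ 0 := by
    rintro u ⟨hu, -, -, -, huw⟩
    by_contra! h
    rw [h.1, h.2, zero_mul, zero_mul, add_zero, add_zero, mul_eq_zero, or_iff_left hw₁] at huw
    exact hu.ne_zero (Prod.ext huw (Prod.ext h.1 h.2))
  let g : ℤ × ℤ × ℤ → ℂ := fun u => ⟨u.2.1 / U₁, u.2.2 / U₂⟩
  have hupper : ({u ∈ S | IsUpperHalf u}.ncard : ℝ) ≤
      π * 2 ^ 2 / (|(w.1 : ℝ)| / (U₁ * U₂)) + 1 := by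
    refine ncard_le_of_abs_im_conj_mul_ge g two_pos (by positivity) ?_ ?_ ?_
    · rintro u ⟨⟨-, -, h₁, h₂, -⟩, -⟩
      have h₁' : |(g u).re| ≤ 1 := by
        rw [abs_div, abs_of_pos hU₁, div_le_one hU₁]; simpa using h₁
      have h₂' : |(g u).im| ≤ 1 := by
        rw [abs_div, abs_of_pos hU₂, div_le_one hU₂]; simpa using h₂
      linarith [Complex.norm_le_abs_re_add_abs_im (g u)]
    · rintro u ⟨-, hu⟩
      have : (0 : ℤ) ≤ u.2.2 := by rcases hu with h | ⟨h, -⟩ <;> omega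
      exact div_nonneg (by exact_mod_cast this) hU₂.le
    · rintro u ⟨hu, huH⟩ v ⟨hv, hvH⟩ huv
      have hcross := abs_fst_le_abs_cross hw hu.1 hv.1 hu.2.2.2.2 hv.2.2.2.2 (Ne.symm huv)
        (fun h => huH.not_neg (h ▸ hvH))
      have him : ((starRingEnd ℂ) (g u) * g v).im =
          ((u.2.1 * v.2.2 - u.2.2 * v.2.1 : ℤ) : ℝ) / (U₁ * U₂) := by
        simp only [g, Complex.mul_im, Complex.conj_re, Complex.conj_im]
        push_cast
        field_simp
        ring
      rw [him, abs_div, abs_of_pos (mul_pos hU₁ hU₂)]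
      exact div_le_div_of_nonneg_right (by exact_mod_cast hcross) (by positivity)
  have htwo := ncard_le_two_mul_ncard_isUpperHalf primSolutions_finite
    (fun _ => neg_mem_primSolutions) hne
  calc (S.ncard : ℝ) ≤ 2 * {u ∈ S | IsUpperHalf u}.ncard := by exact_mod_cast htwo
    _ ≤ 2 * (π * 2 ^ 2 / (|(w.1 : ℝ)| / (U₁ * U₂)) + 1) := by gcongr
    _ = 8 * π * (U₁ * U₂) / |(w.1 : ℝ)| + 2 := by field_simp; ring

end primSolutions

def rotate (u : ℤ × ℤ × ℤ) : ℤ × ℤ × ℤ := (u.2.1, u.2.2, u.1)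

theorem isPrimitiveVec_rotate {u : ℤ × ℤ × ℤ} : IsPrimitiveVec (rotate u) ↔ IsPrimitiveVec u := by
  simp only [IsPrimitiveVec, rotate]
  rw [← Int.gcd_assoc, Int.gcd_comm]

theorem rotate_injective : Function.Injective rotate := fun u v h => by
  simp_all [rotate, Prod.ext_iff]

theorem rotate_surjective : Function.Surjective rotate := fun v => ⟨(v.2.2, v.1, v.2.1), rfl⟩

theorem rotate_preimage_primSolutions (w : ℤ × ℤ × ℤ) (U₀ U₁ U₂ : ℝ) :
    rotate ⁻¹' primSolutions (rotate w) U₁ U₂ U₀ = primSolutions w U₀ U₁ U₂ := by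
  ext u
  simp only [primSolutions, Set.mem_preimage, Set.mem_ofPred_eq, isPrimitiveVec_rotate]
  simp only [rotate]
  constructor
  · rintro ⟨hp, h₁, h₂, h₀, huw⟩
    exact ⟨hp, h₀, h₁, h₂, by linear_combination huw⟩
  · rintro ⟨hp, h₀, h₁, h₂, huw⟩
    exact ⟨hp, h₁, h₂, h₀, by linear_combination huw⟩

theorem ncard_primSolutions_rotate (w : ℤ × ℤ × ℤ) (U₀ U₁ U₂ : ℝ) :
    (primSolutions (rotate w) U₁ U₂ U₀).ncard = (primSolutions w U₀ U₁ U₂).ncard := by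
  rw [← rotate_preimage_primSolutions w U₀ U₁ U₂]
  exact (Set.ncard_preimage_of_injective_subset_range rotate_injective
    (by simp [rotate_surjective.range_eq])).symm

theorem ncard_primSolutions_le_of_max_eq {w : ℤ × ℤ × ℤ} {U₀ U₁ U₂ M : ℝ} (hw : IsPrimitiveVec w)
    (hU₀ : 0 < U₀) (hU₁ : 0 < U₁) (hU₂ : 0 < U₂) (hM : 0 < M) (hMw : M = |(w.1 : ℝ)| * U₀) :
    ((primSolutions w U₀ U₁ U₂).ncard : ℝ) ≤ 8 * π * (U₀ * U₁ * U₂) / M + 2 := by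
  have hw₁ : w.1 ≠ 0 := by
    rintro h
    simp [h] at hMw
    linarith
  calc ((primSolutions w U₀ U₁ U₂).ncard : ℝ) ≤ 8 * π * (U₁ * U₂) / |(w.1 : ℝ)| + 2 :=
        ncard_primSolutions_le hw hw₁ hU₁ hU₂
    _ = 8 * π * (U₀ * U₁ * U₂) / M + 2 := by rw [hMw]; field_simp

theorem stmt9_general (w : ℤ × ℤ × ℤ) (hw : IsPrimitiveVec w)
    (U₀ U₁ U₂ : ℝ) (hU₀ : 1 ≤ U₀) (hU₁ : 1 ≤ U₁) (hU₂ : 1 ≤ U₂) :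
    (({u : ℤ × ℤ × ℤ | IsPrimitiveVec u ∧
        (|u.1| : ℝ) ≤ U₀ ∧ (|u.2.1| : ℝ) ≤ U₁ ∧ (|u.2.2| : ℝ) ≤ U₂ ∧
        u.1 * w.1 + u.2.1 * w.2.1 + u.2.2 * w.2.2 = 0}.ncard : ℝ)) ≤
      12 * π * (U₀ * U₁ * U₂) /
        max ((|w.1| : ℝ) * U₀) (max ((|w.2.1| : ℝ) * U₁) ((|w.2.2| : ℝ) * U₂)) + 4 := by
  change ((primSolutions w U₀ U₁ U₂).ncard : ℝ) ≤ _
  replace hU₀ : 0 < U₀ := by linarith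
  replace hU₁ : 0 < U₁ := by linarith
  replace hU₂ : 0 < U₂ := by linarith
  set M := max ((|w.1| : ℝ) * U₀) (max ((|w.2.1| : ℝ) * U₁) ((|w.2.2| : ℝ) * U₂))
  have hM : 0 < M := by
    obtain h | h | h : w.1 ≠ 0 ∨ w.2.1 ≠ 0 ∨ w.2.2 ≠ 0 := by
      by_contra! h
      exact hw.ne_zero (Prod.ext h.1 (Prod.ext h.2.1 h.2.2))
    · exact (mul_pos (by positivity) hU₀).trans_le (le_max_left _ _)
    · exact (mul_pos (by positivity) hU₁).trans_le ((le_max_left _ _).trans (le_max_right _ _))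
    · exact (mul_pos (by positivity) hU₂).trans_le ((le_max_right _ _).trans (le_max_right _ _))
  have key : ((primSolutions w U₀ U₁ U₂).ncard : ℝ) ≤ 8 * π * (U₀ * U₁ * U₂) / M + 2 := by
    rcases max_choice ((|w.1| : ℝ) * U₀) (max ((|w.2.1| : ℝ) * U₁) ((|w.2.2| : ℝ) * U₂)) with h | h
    · exact ncard_primSolutions_le_of_max_eq hw hU₀ hU₁ hU₂ hM h
    rcases max_choice ((|w.2.1| : ℝ) * U₁) ((|w.2.2| : ℝ) * U₂) with h' | h'
    · have := ncard_primSolutions_le_of_max_eq (w := rotate w) (isPrimitiveVec_rotate.mpr hw)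
        hU₁ hU₂ hU₀ hM (h.trans h')
      rwa [ncard_primSolutions_rotate, ← mul_rotate U₀ U₁ U₂] at this
    · have := ncard_primSolutions_le_of_max_eq (w := rotate (rotate w))
        (isPrimitiveVec_rotate.mpr (isPrimitiveVec_rotate.mpr hw)) hU₂ hU₀ hU₁ hM (h.trans h')
      rwa [ncard_primSolutions_rotate, ncard_primSolutions_rotate, mul_rotate U₂ U₀ U₁] at this
  have hpos : 0 ≤ π * (U₀ * U₁ * U₂) / M := by positivity
  have hsplit : 12 * π * (U₀ * U₁ * U₂) / M =
      8 * π * (U₀ * U₁ * U₂) / M + 4 * (π * (U₀ * U₁ * U₂) / M) := by ring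
  linarith

theorem stmt9 (w : ℤ × ℤ × ℤ) (hw : IsPrimitiveVec w) (hw0 : w ≠ 0)
    (U₀ U₁ U₂ : ℝ) (hU₀ : 1 ≤ U₀) (hU₁ : 1 ≤ U₁) (hU₂ : 1 ≤ U₂) :
    (({u : ℤ × ℤ × ℤ | IsPrimitiveVec u ∧
        (|u.1| : ℝ) ≤ U₀ ∧ (|u.2.1| : ℝ) ≤ U₁ ∧ (|u.2.2| : ℝ) ≤ U₂ ∧
        u.1 * w.1 + u.2.1 * w.2.1 + u.2.2 * w.2.2 = 0}.ncard : ℝ)) ≤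
      12 * π * (U₀ * U₁ * U₂) /
        max ((|w.1| : ℝ) * U₀) (max ((|w.2.1| : ℝ) * U₁) ((|w.2.2| : ℝ) * U₂)) + 4 :=
  stmt9_general w hw U₀ U₁ U₂ hU₀ hU₁ hU₂
end

section
/- Let ε > 0 be fixed. There is a constant C(ε) such that for all real F₁, F₂ ≥ 1/2 and every positive integer q, one has Σ_{F₁ < f₁ ≤ 2F₁, F₂ < f₂ ≤ 2F₂, gcd(f₁,f₂) = 1, gcd(f₁f₂,q) = 1} M(q, f₁², f₂²) ≤ C(ε) · q^ε · (F₁F₂ + q), where f₁, f₂ range over positive integers. -/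
open Finset

/-- `Mweight q a₁ a₂ = ∑_{d ∣ q} d ∑_{0 < |r|,|s| ≤ q/2, a₁s + a₂r ≡ 0 (mod d)}
|r|⁻¹ |s|⁻¹`. -/
noncomputable def Mweight (q : ℕ) (a₁ a₂ : ℤ) : ℝ :=
  ∑ d ∈ q.divisors, (d : ℝ) *
    ∑ r ∈ Finset.Icc (-(q : ℤ)) (q : ℤ), ∑ s ∈ Finset.Icc (-(q : ℤ)) (q : ℤ),
      if r ≠ 0 ∧ s ≠ 0 ∧ 2 * |r| ≤ (q : ℤ) ∧ 2 * |s| ≤ (q : ℤ) ∧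
          (d : ℤ) ∣ (a₁ * s + a₂ * r) then
        (|(r : ℝ)| * |(s : ℝ)|)⁻¹ else 0

/-!
Exchanging the order of summation, the sum becomes `∑_{d ∣ q} ∑_{r,s} d |rs|⁻¹ N_d(r,s)`, where
`N_d(r,s)` counts the admissible pairs `(f₁, f₂)` of the box `(n₁, m₁] × (n₂, m₂]` with
`d ∣ f₁² s + f₂² r`. Write `g = gcd(s, d)` and `d = g d'`. A solution forces `g ∣ r`, and modulo
`d'` it gives `(f₂ / f₁)² = -s / r` with `s, r` units, so `f₂ / f₁` is one of at most `2 τ(d')`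
residues (`z² = 1` has at most two solutions with a given `gcd(z - 1, d')`). In a dyadic box,
coprime pairs with a fixed ratio modulo `d'` number at most `2 m₁m₂ / d' + 1`, since
`(x, y) ↦ xB - yA` embeds them into the multiples of `d'` in `[-m₁m₂, m₁m₂]`. Hence
`d N_d(r,s) ≤ 2 τ(q) (2 m₁m₂ + q) g`, and the factor `g` is absorbed by the sum of `|r|⁻¹` over
the multiples of `g`, which is at most `2 H_q / g`. Altogether the sum is at most
`8 (τ(q) H_q)² (2 m₁m₂ + q)`, and `τ(q) H_q ≪ q^(ε/2)`.
-/

theorem harmonic_le_rpow {δ : ℝ} (hδ : 0 < δ) {n : ℕ} (hn : 1 ≤ n) :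
    (harmonic n : ℝ) ≤ (1 + 1 / δ) * (n : ℝ) ^ δ := by
  have h1 : (1 : ℝ) ≤ (n : ℝ) ^ δ := Real.one_le_rpow (by exact_mod_cast hn) hδ.le
  have h2 : Real.log n ≤ (n : ℝ) ^ δ / δ := Real.log_le_rpow_div (by positivity) hδ
  calc (harmonic n : ℝ) ≤ 1 + Real.log n := harmonic_le_one_add_log n
    _ ≤ (n : ℝ) ^ δ + (n : ℝ) ^ δ / δ := by linarith
    _ = (1 + 1 / δ) * (n : ℝ) ^ δ := by ring

theorem sum_inv_abs_multiples_le (q g : ℕ) (hg : 0 < g) :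
    ∑ x ∈ Icc (-(q : ℤ)) q with x ≠ 0 ∧ (g : ℤ) ∣ x, |(x : ℝ)|⁻¹ ≤ 2 * harmonic q / g := by
  set S := {x ∈ Icc (-(q : ℤ)) q | x ≠ 0 ∧ (g : ℤ) ∣ x}
  have hmaps : ∀ x ∈ S, x.natAbs / g ∈ Icc 1 q := by
    intro x hx
    simp only [S, mem_filter, mem_Icc] at hx ⊢
    obtain ⟨⟨hlo, hhi⟩, hx0, k, rfl⟩ := hx
    have hq : g * k.natAbs ≤ q := by
      rw [← Int.natAbs_natCast g, ← Int.natAbs_mul]; omega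
    rw [Int.natAbs_mul, Int.natAbs_natCast, Nat.mul_div_cancel_left _ hg]
    have hk : k ≠ 0 := by rintro rfl; simp at hx0
    exact ⟨Int.natAbs_pos.mpr hk, (Nat.le_mul_of_pos_left _ hg).trans hq⟩
  have hfiber : ∀ k ∈ Icc 1 q,
      ∑ x ∈ S with x.natAbs / g = k, |(x : ℝ)|⁻¹ ≤ 2 * ((g : ℝ) * k)⁻¹ := by
    intro k _
    have habs : ∀ x ∈ {x ∈ S | x.natAbs / g = k}, x.natAbs = g * k := by
      intro x hx
      obtain ⟨⟨-, -, hdvd⟩, rfl⟩ := mem_filter.mp hx |>.imp_left (mem_filter.mp ·)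
      exact (Nat.mul_div_cancel' (Int.natCast_dvd.mp hdvd)).symm
    have hcard : #{x ∈ S | x.natAbs / g = k} ≤ 2 :=
      (card_le_card fun x hx => by
        simpa only [mem_insert, mem_singleton] using Int.natAbs_eq_iff.mp (habs x hx)).trans
        (card_le_two (a := ((g * k : ℕ) : ℤ)) (b := -((g * k : ℕ) : ℤ)))
    calc ∑ x ∈ S with x.natAbs / g = k, |(x : ℝ)|⁻¹
        = ∑ x ∈ S with x.natAbs / g = k, ((g : ℝ) * k)⁻¹ := sum_congr rfl fun x hx => by
          rw [← Int.cast_abs, Int.abs_eq_natAbs, habs x hx]; push_cast; rfl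
      _ ≤ 2 * ((g : ℝ) * k)⁻¹ := by
          rw [sum_const, nsmul_eq_mul]
          gcongr
          exact_mod_cast hcard
  calc ∑ x ∈ S, |(x : ℝ)|⁻¹ = ∑ k ∈ Icc 1 q, ∑ x ∈ S with x.natAbs / g = k, |(x : ℝ)|⁻¹ :=
        (sum_fiberwise_of_maps_to hmaps _).symm
    _ ≤ ∑ k ∈ Icc 1 q, 2 * ((g : ℝ) * k)⁻¹ := sum_le_sum hfiber
    _ = 2 * harmonic q / g := by
        rw [harmonic_eq_sum_Icc]
        push_cast
        rw [mul_sum, sum_div]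
        exact sum_congr rfl fun k _ => by rw [mul_inv]; ring

theorem succ_le_pow_div_min {t x : ℝ} (ht : 0 < t) (hx : 1 + t ≤ x) (a : ℕ) :
    (a + 1 : ℝ) ≤ x ^ a / min 1 t := by
  rw [le_div_iff₀ (lt_min one_pos ht)]
  calc (a + 1 : ℝ) * min 1 t ≤ 1 + a * t := by
        nlinarith [min_le_left 1 t, min_le_right 1 t, (Nat.cast_nonneg a : (0 : ℝ) ≤ a)]
    _ ≤ (1 + t) ^ a := one_add_mul_le_pow (by linarith) a
    _ ≤ x ^ a := pow_le_pow_left₀ (by linarith) hx a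

theorem Nat.cast_rpow_eq_prod_primeFactors {n : ℕ} (hn : n ≠ 0) (δ : ℝ) :
    (n : ℝ) ^ δ = ∏ p ∈ n.primeFactors, ((p : ℝ) ^ δ) ^ n.factorization p := by
  conv_lhs => rw [Nat.prod_primeFactors_pow_factorization hn]
  push_cast
  rw [← Real.finsetProd_rpow _ _ (fun p _ => by positivity)]
  exact prod_congr rfl fun p _ => (Real.rpow_pow_comm (by positivity) δ _).symm

theorem exists_card_divisors_le_rpow {δ : ℝ} (hδ : 0 < δ) :
    ∃ C : ℝ, ∀ n : ℕ, n ≠ 0 → (#n.divisors : ℝ) ≤ C * (n : ℝ) ^ δ := by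
  set t : ℝ := 2 ^ δ - 1
  have ht : 0 < t := by linarith [Real.one_lt_rpow (by norm_num : (1 : ℝ) < 2) hδ]
  set K : ℝ := (min 1 t)⁻¹
  have hK : 1 ≤ K := one_le_inv₀ (lt_min one_pos ht) |>.mpr (min_le_left 1 t)
  -- primes `p ≥ B` have `p ^ δ ≥ 2`, so they contribute a factor at most `1`
  set B : ℕ := ⌈(2 : ℝ) ^ δ⁻¹⌉₊
  have hprime : ∀ p : ℕ, p.Prime → ∀ a : ℕ,
      (a + 1 : ℝ) ≤ (if p < B then K else 1) * ((p : ℝ) ^ δ) ^ a := by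
    intro p hp a
    have hp2 : (2 : ℝ) ≤ p := by exact_mod_cast hp.two_le
    split_ifs with hpB
    · rw [mul_comm, ← div_eq_mul_inv]
      refine succ_le_pow_div_min ht ?_ a
      rw [add_sub_cancel]
      exact Real.rpow_le_rpow (by norm_num) hp2 hδ.le
    · have hlarge : (2 : ℝ) ≤ (p : ℝ) ^ δ := by
        calc (2 : ℝ) = ((2 : ℝ) ^ δ⁻¹) ^ δ := (Real.rpow_inv_rpow (by norm_num) hδ.ne').symm
          _ ≤ (p : ℝ) ^ δ := Real.rpow_le_rpow (by positivity)
              ((Nat.le_ceil _).trans (by exact_mod_cast not_lt.mp hpB)) hδ.le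
      simpa using succ_le_pow_div_min one_pos (by linarith : 1 + 1 ≤ (p : ℝ) ^ δ) a
  refine ⟨K ^ B, fun n hn => ?_⟩
  have hτ : (#n.divisors : ℝ) = ∏ p ∈ n.primeFactors, ((n.factorization p : ℝ) + 1) := by
    rw [Nat.card_divisors hn]; push_cast; rfl
  have hsmall : ∏ p ∈ n.primeFactors, (if p < B then K else 1) ≤ K ^ B := by
    rw [prod_ite, prod_const, prod_const, one_pow, mul_one]
    refine pow_le_pow_right₀ hK ((card_le_card fun p hp => ?_).trans (card_range B).le)
    exact mem_range.mpr (mem_filter.mp hp).2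
  calc (#n.divisors : ℝ)
      ≤ ∏ p ∈ n.primeFactors, (if p < B then K else 1) * ((p : ℝ) ^ δ) ^ n.factorization p := by
        rw [hτ]
        exact prod_le_prod (fun _ _ => by positivity)
          fun p hp => hprime p (Nat.prime_of_mem_primeFactors hp) _
    _ = (∏ p ∈ n.primeFactors, (if p < B then K else 1)) * (n : ℝ) ^ δ := by
        rw [prod_mul_distrib, Nat.cast_rpow_eq_prod_primeFactors hn]
    _ ≤ K ^ B * (n : ℝ) ^ δ := by gcongr

theorem exists_card_divisors_mul_harmonic_sq_le {ε : ℝ} (hε : 0 < ε) :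
    ∃ C : ℝ, ∀ q : ℕ, q ≠ 0 → ((#q.divisors : ℝ) * harmonic q) ^ 2 ≤ C * (q : ℝ) ^ ε := by
  obtain ⟨Cτ, hCτ⟩ := exists_card_divisors_le_rpow (by positivity : 0 < ε / 4)
  refine ⟨(Cτ * (1 + 1 / (ε / 4))) ^ 2, fun q hq => ?_⟩
  have hq0 : (0 : ℝ) < q := by exact_mod_cast Nat.pos_of_ne_zero hq
  have hH : (0 : ℝ) ≤ harmonic q := Rat.cast_nonneg.mpr (harmonic_pos hq).le
  have hpow : ((q : ℝ) ^ (ε / 4)) ^ 4 = (q : ℝ) ^ ε := by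
    rw [← Real.rpow_natCast, ← Real.rpow_mul hq0.le]; norm_num
  have hτ := hCτ q hq
  calc ((#q.divisors : ℝ) * harmonic q) ^ 2
      ≤ (Cτ * (q : ℝ) ^ (ε / 4) * ((1 + 1 / (ε / 4)) * (q : ℝ) ^ (ε / 4))) ^ 2 :=
        pow_le_pow_left₀ (by positivity) (mul_le_mul hτ
          (harmonic_le_rpow (by positivity) (Nat.one_le_iff_ne_zero.mpr hq)) hH
          ((Nat.cast_nonneg _).trans hτ)) 2
    _ = (Cτ * (1 + 1 / (ε / 4))) ^ 2 * (q : ℝ) ^ ε := by rw [← hpow]; ring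

theorem ZMod.dvd_val_sub_iff {n k : ℕ} [NeZero n] (hk : k ∣ n) (x y : ZMod n) :
    k ∣ (x - y).val ↔ castHom hk (ZMod k) x = castHom hk (ZMod k) y := by
  rw [← sub_eq_zero, ← map_sub, castHom_apply, ← natCast_val, natCast_eq_zero_iff]

theorem ZMod.mul_inv_sq_eq_one {n : ℕ} {u v : ZMod n} (hu : IsUnit u) (h : v ^ 2 = u ^ 2) :
    (v * u⁻¹) ^ 2 = 1 := by
  linear_combination u⁻¹ ^ 2 * h + (u * u⁻¹ + 1) * mul_inv_of_unit _ hu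

theorem ZMod.mul_eq_mul_of_mul_inv_eq {n : ℕ} {u u' v v' : ZMod n} (hu : IsUnit u)
    (hu' : IsUnit u') (h : v * u⁻¹ = v' * u'⁻¹) : v * u' = v' * u := by
  linear_combination u * u' * h - v * u' * mul_inv_of_unit _ hu + v' * u * mul_inv_of_unit _ hu'

theorem ZMod.card_two_mul_eq_zero_le (n : ℕ) [NeZero n] : #{w : ZMod n | 2 * w = 0} ≤ 2 := by
  calc #{w : ZMod n | 2 * w = 0} ≤ #({0, n / 2} : Finset ℕ) := by
        refine card_le_card_of_injOn val (fun w hw => ?_) (val_injective n).injOn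
        obtain ⟨k, hk⟩ : n ∣ 2 * w.val := by
          rw [← natCast_eq_zero_iff]; push_cast; rw [natCast_zmod_val]
          exact (mem_filter.mp hw).2
        have hlt := val_lt w
        have : k < 2 := by nlinarith
        simp only [coe_insert, coe_singleton, Set.mem_insert_iff, Set.mem_singleton_iff]
        interval_cases k <;> omega
    _ ≤ 2 := card_le_two

theorem ZMod.card_le_two_of_dvd_val {n e m : ℕ} [NeZero n] (hem : n = e * m)
    (F : Finset (ZMod n)) (hF : ∀ z ∈ F, e ∣ (z - 1).val ∧ m ∣ (z - -1).val) : #F ≤ 2 := by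
  rcases F.eq_empty_or_nonempty with rfl | ⟨z₀, hz₀⟩
  · simp
  have hcast : ∀ {k : ℕ} (hk : k ∣ n) (c z : ZMod n), k ∣ (z - c).val → k ∣ (z₀ - c).val →
      castHom hk (ZMod k) z = castHom hk (ZMod k) z₀ := by
    intro k hk c z h h₀
    rw [dvd_val_sub_iff hk] at h h₀
    rw [h, h₀]
  have hen : e ∣ n := Dvd.intro m hem.symm
  have hmn : m ∣ n := Dvd.intro_left e hem.symm
  have hgn : Nat.gcd e m ∣ n := (Nat.gcd_dvd_left e m).trans hen
  have hgcd : Nat.gcd e m ∣ 2 := by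
    have h1 := (dvd_val_sub_iff hgn z₀ 1).mp ((Nat.gcd_dvd_left e m).trans (hF z₀ hz₀).1)
    have h2 := (dvd_val_sub_iff hgn z₀ (-1)).mp ((Nat.gcd_dvd_right e m).trans (hF z₀ hz₀).2)
    rw [map_one] at h1
    rw [map_neg, map_one, h1] at h2
    rw [← natCast_eq_zero_iff]
    push_cast
    linear_combination h2
  have htwo : ∀ z ∈ F, 2 * (z - z₀) = 0 := by
    intro z hz
    have h1 : e ∣ (z - z₀).val :=
      (dvd_val_sub_iff hen z z₀).mpr (hcast hen 1 z (hF z hz).1 (hF z₀ hz₀).1)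
    have h2 : m ∣ (z - z₀).val :=
      (dvd_val_sub_iff hmn z z₀).mpr (hcast hmn (-1) z (hF z hz).2 (hF z₀ hz₀).2)
    have hn : n ∣ 2 * (z - z₀).val := by
      have := mul_dvd_mul hgcd (Nat.lcm_dvd h1 h2)
      rwa [Nat.gcd_mul_lcm e m, ← hem] at this
    rw [← natCast_eq_zero_iff] at hn
    push_cast at hn
    rwa [natCast_zmod_val] at hn
  calc #F ≤ #{w : ZMod n | 2 * w = 0} :=
        card_le_card_of_injOn (· - z₀) (fun z hz => by simpa using htwo z hz)
          (fun _ _ _ _ h => sub_left_injective h)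
    _ ≤ 2 := card_two_mul_eq_zero_le n

theorem ZMod.card_sq_eq_one_le (n : ℕ) [NeZero n] :
    #{z : ZMod n | z ^ 2 = 1} ≤ 2 * #n.divisors := by
  set S : Finset (ZMod n) := {z : ZMod n | z ^ 2 = 1}
  have hmaps : Set.MapsTo (fun z : ZMod n => Nat.gcd n (z - 1).val) S n.divisors := fun z _ =>
    Nat.mem_divisors.mpr ⟨Nat.gcd_dvd_left _ _, NeZero.ne n⟩
  rw [card_eq_sum_card_fiberwise hmaps, mul_comm, ← smul_eq_mul, ← sum_const]
  refine sum_le_sum fun e he => ?_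
  obtain ⟨m, hem⟩ := (Nat.mem_divisors.mp he).1
  refine card_le_two_of_dvd_val hem _ fun z hz => ?_
  simp only [S, mem_filter, mem_univ, true_and] at hz
  obtain ⟨hz, rfl⟩ := hz
  have hsq : n ∣ (z - 1).val * (z - -1).val := by
    rw [← natCast_eq_zero_iff]; push_cast; simp only [natCast_zmod_val]
    linear_combination hz
  refine ⟨Nat.gcd_dvd_right n _, Nat.dvd_of_mul_dvd_mul_left (Nat.pos_of_mem_divisors he) ?_⟩
  rw [← hem]
  exact dvd_gcd_mul_iff_dvd_mul.mpr hsq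

theorem Int.card_filter_dvd_Icc_le (W n : ℕ) (hn : 0 < n) :
    #{u ∈ Icc (-(W : ℤ)) W | (n : ℤ) ∣ u} ≤ 2 * (W / n) + 1 := by
  have hn' : (0 : ℤ) < n := by exact_mod_cast hn
  calc #{u ∈ Icc (-(W : ℤ)) W | (n : ℤ) ∣ u} ≤ #(Icc (-((W / n : ℕ) : ℤ)) (W / n : ℕ)) := by
        refine card_le_card_of_injOn (· / (n : ℤ)) (fun u hu => ?_) (fun u hu u' hu' h => ?_)
        · simp only [coe_filter, mem_Icc, Set.mem_ofPred_eq, coe_Icc, Set.mem_Icc] at hu ⊢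
          obtain ⟨⟨hlo, hhi⟩, k, rfl⟩ := hu
          rw [Int.mul_ediv_cancel_left _ hn'.ne', Int.natCast_div]
          constructor
          · rw [neg_le, Int.le_ediv_iff_mul_le hn']; linarith
          · rw [Int.le_ediv_iff_mul_le hn']; linarith
        · simp only [coe_filter, Set.mem_ofPred_eq] at hu hu'
          rw [← Int.ediv_mul_cancel hu.2, ← Int.ediv_mul_cancel hu'.2]
          exact congrArg (· * (n : ℤ)) h
    _ = 2 * (W / n) + 1 := by rw [Int.card_Icc]; omega

theorem card_le_of_dvd_cross (n n₁ m₁ n₂ m₂ : ℕ) (hn : 0 < n) (h₁ : m₁ ≤ 2 * n₁ + 1)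
    (T : Finset (ℕ × ℕ)) (hT : T ⊆ Ioc n₁ m₁ ×ˢ Ioc n₂ m₂)
    (hcop : ∀ P ∈ T, Nat.Coprime P.1 P.2)
    (hcross : ∀ P ∈ T, ∀ P' ∈ T, (n : ℤ) ∣ P.1 * P'.2 - P.2 * P'.1) :
    #T ≤ 2 * (m₁ * m₂ / n) + 1 := by
  rcases T.eq_empty_or_nonempty with rfl | ⟨⟨A, B⟩, hAB⟩
  · simp
  have hbox : ∀ P ∈ T, (n₁ < P.1 ∧ P.1 ≤ m₁) ∧ (n₂ < P.2 ∧ P.2 ≤ m₂) := fun P hP => by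
    simpa only [mem_product, mem_Ioc] using hT hP
  obtain ⟨⟨hA, hA'⟩, ⟨-, hB'⟩⟩ := hbox _ hAB
  refine le_trans (card_le_card_of_injOn (fun P : ℕ × ℕ => (P.1 * B - P.2 * A : ℤ))
    (fun P hP => ?_) (fun P hP P' hP' h => ?_)) (Int.card_filter_dvd_Icc_le _ n hn)
  · obtain ⟨⟨-, h1⟩, ⟨-, h2⟩⟩ := hbox P hP
    have e1 : P.1 * B ≤ m₁ * m₂ := Nat.mul_le_mul h1 hB'
    have e2 : P.2 * A ≤ m₁ * m₂ := by rw [mul_comm m₁]; exact Nat.mul_le_mul h2 hA'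
    simp only [coe_filter, mem_Icc, Set.mem_ofPred_eq]
    refine ⟨⟨?_, ?_⟩, hcross P hP _ hAB⟩ <;> push_cast <;> nlinarith
  · obtain ⟨⟨h1, h1'⟩, -⟩ := hbox P hP
    obtain ⟨⟨h2, h2'⟩, -⟩ := hbox P' hP'
    have hrel : (B : ℤ) * (P.1 - P'.1) = A * (P.2 - P'.2) := by simp only at h; linarith
    have hdvd : (A : ℤ) ∣ P.1 - P'.1 :=
      (Nat.isCoprime_iff_coprime.mpr (hcop _ hAB)).dvd_of_dvd_mul_left (Dvd.intro _ hrel.symm)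
    -- the dyadic condition makes `|P.1 - P'.1| < A`
    have hx : (P.1 : ℤ) - P'.1 = 0 := Int.eq_zero_of_abs_lt_dvd hdvd (by rw [abs_lt]; omega)
    rw [hx, mul_zero, zero_eq_mul] at hrel
    have hy : (P.2 : ℤ) - P'.2 = 0 := hrel.resolve_left (by omega)
    exact Prod.ext (by omega) (by omega)

-- the pairs counted by `N_d(r, s)`
def congruencePairs (q d n₁ m₁ n₂ m₂ : ℕ) (r s : ℤ) : Finset (ℕ × ℕ) :=
  {P ∈ Ioc n₁ m₁ ×ˢ Ioc n₂ m₂ | (Nat.Coprime P.1 P.2 ∧ Nat.Coprime (P.1 * P.2) q) ∧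
    (d : ℤ) ∣ (P.1 : ℤ) ^ 2 * s + (P.2 : ℤ) ^ 2 * r}

theorem isUnit_of_mem_congruencePairs {n n₁ m₁ n₂ m₂ : ℕ} {r s : ℤ} {P : ℕ × ℕ}
    (hP : P ∈ congruencePairs n n n₁ m₁ n₂ m₂ r s) :
    IsUnit (P.1 : ZMod n) ∧ IsUnit (P.2 : ZMod n) ∧
      (P.1 : ZMod n) ^ 2 * s + (P.2 : ZMod n) ^ 2 * r = 0 := by
  obtain ⟨-, ⟨-, hcop⟩, hdvd⟩ := mem_filter.mp hP
  refine ⟨(ZMod.isUnit_iff_coprime _ n).mpr (Nat.Coprime.coprime_mul_right hcop),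
    (ZMod.isUnit_iff_coprime _ n).mpr (Nat.Coprime.coprime_mul_left hcop), ?_⟩
  simpa using (ZMod.intCast_zmod_eq_zero_iff_dvd _ n).mpr hdvd

theorem card_congruencePairs_le_of_isCoprime (n n₁ m₁ n₂ m₂ : ℕ) [NeZero n]
    (h₁ : m₁ ≤ 2 * n₁ + 1) (r s : ℤ) (hs : IsCoprime (n : ℤ) s) :
    #(congruencePairs n n n₁ m₁ n₂ m₂ r s) ≤ 2 * #n.divisors * (2 * (m₁ * m₂ / n) + 1) := by
  set T := congruencePairs n n n₁ m₁ n₂ m₂ r s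
  rcases T.eq_empty_or_nonempty with hT | ⟨⟨a, b⟩, hab⟩
  · simp [hT]
  obtain ⟨ha, hb, hab0⟩ := isUnit_of_mem_congruencePairs hab
  have hru : IsUnit (r : ZMod n) := by
    refine isUnit_of_mul_isUnit_right (x := (b : ZMod n) ^ 2) ?_
    rw [eq_neg_of_add_eq_zero_right hab0]
    exact ((ha.pow 2).mul ((ZMod.coe_int_isUnit_iff_isCoprime s n).mpr hs)).neg
  -- `θ P = (P.2 / P.1) / (b / a)`
  set θ : ℕ × ℕ → ZMod n := fun P => (P.2 * a) * (P.1 * b : ZMod n)⁻¹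
  set roots : Finset (ZMod n) := {z : ZMod n | z ^ 2 = 1}
  have hθ : Set.MapsTo θ T roots := by
    intro P hP
    obtain ⟨hx, -, hP0⟩ := isUnit_of_mem_congruencePairs hP
    simp only [roots, coe_filter, mem_univ, true_and, Set.mem_ofPred_eq, θ]
    refine ZMod.mul_inv_sq_eq_one (hx.mul hb) (hru.mul_left_cancel ?_)
    linear_combination (a : ZMod n) ^ 2 * hP0 - (P.1 : ZMod n) ^ 2 * hab0
  have hfiber : ∀ z ∈ roots, #{P ∈ T | θ P = z} ≤ 2 * (m₁ * m₂ / n) + 1 := by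
    intro z _
    refine card_le_of_dvd_cross n n₁ m₁ n₂ m₂ (Nat.pos_of_ne_zero (NeZero.ne n)) h₁ _
      ((filter_subset _ _).trans (filter_subset _ _)) (fun P hP => ?_) (fun P hP P' hP' => ?_)
    · exact (mem_filter.mp (mem_filter.mp hP).1).2.1.1
    obtain ⟨hP, hPz⟩ := mem_filter.mp hP
    obtain ⟨hP', hP'z⟩ := mem_filter.mp hP'
    have h := ZMod.mul_eq_mul_of_mul_inv_eq ((isUnit_of_mem_congruencePairs hP).1.mul hb)
      ((isUnit_of_mem_congruencePairs hP').1.mul hb) (hPz.trans hP'z.symm)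
    rw [← ZMod.intCast_zmod_eq_zero_iff_dvd]
    push_cast
    exact (ha.mul hb).mul_left_eq_zero.mp (by linear_combination -h)
  calc #T = ∑ z ∈ roots, #{P ∈ T | θ P = z} := card_eq_sum_card_fiberwise hθ
    _ ≤ #roots * (2 * (m₁ * m₂ / n) + 1) := by
        rw [← smul_eq_mul, ← sum_const]; exact sum_le_sum hfiber
    _ ≤ 2 * #n.divisors * (2 * (m₁ * m₂ / n) + 1) := by
        gcongr; exact ZMod.card_sq_eq_one_le n

theorem gcd_dvd_of_mem_congruencePairs {q d n₁ m₁ n₂ m₂ : ℕ} {r s : ℤ} (hdq : d ∣ q)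
    {P : ℕ × ℕ} (hP : P ∈ congruencePairs q d n₁ m₁ n₂ m₂ r s) : (Int.gcd s d : ℤ) ∣ r := by
  obtain ⟨-, ⟨-, hcop⟩, hdvd⟩ := mem_filter.mp hP
  have hgq : Int.gcd s d ∣ q := (Int.natCast_dvd_natCast.mp (Int.gcd_dvd_right s d)).trans hdq
  have hcop2 : IsCoprime (Int.gcd s d : ℤ) ((P.2 : ℤ) ^ 2) := by
    exact_mod_cast Nat.isCoprime_iff_coprime.mpr
      ((Nat.Coprime.coprime_mul_left hcop).symm.coprime_dvd_left hgq |>.pow_right 2)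
  refine hcop2.dvd_of_dvd_mul_left ((dvd_add_right ?_).mp ((Int.gcd_dvd_right s d).trans hdvd))
  exact dvd_mul_of_dvd_right (Int.gcd_dvd_left s d) _

theorem congruencePairs_mul_subset {q g d n₁ m₁ n₂ m₂ : ℕ} {r s : ℤ} (hg : g ≠ 0)
    (hdq : d ∣ q) :
    congruencePairs q (g * d) n₁ m₁ n₂ m₂ (g * r) (g * s) ⊆
      congruencePairs d d n₁ m₁ n₂ m₂ r s := by
  intro P hP
  obtain ⟨hbox, ⟨hcop, hq⟩, hdvd⟩ := mem_filter.mp hP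
  refine mem_filter.mpr ⟨hbox, ⟨hcop, hq.coprime_dvd_right hdq⟩, ?_⟩
  rw [Nat.cast_mul, show (P.1 : ℤ) ^ 2 * (g * s) + (P.2 : ℤ) ^ 2 * (g * r) =
    g * ((P.1 : ℤ) ^ 2 * s + (P.2 : ℤ) ^ 2 * r) by ring] at hdvd
  exact (mul_dvd_mul_iff_left (by exact_mod_cast hg : (g : ℤ) ≠ 0)).mp hdvd

theorem card_congruencePairs_le (q d n₁ m₁ n₂ m₂ : ℕ) (hq : q ≠ 0) (hdq : d ∣ q)
    (h₁ : m₁ ≤ 2 * n₁ + 1) (r s : ℤ) :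
    d * #(congruencePairs q d n₁ m₁ n₂ m₂ r s) ≤
      Int.gcd s d * (2 * #q.divisors * (2 * (m₁ * m₂) + q)) := by
  set T := congruencePairs q d n₁ m₁ n₂ m₂ r s
  rcases T.eq_empty_or_nonempty with hT | ⟨P₀, hP₀⟩
  · simp [hT]
  set g := Int.gcd s d
  have hd : d ≠ 0 := by rintro rfl; exact hq (zero_dvd_iff.mp hdq)
  have hg : 0 < g := Int.gcd_pos_of_ne_zero_right s (by exact_mod_cast hd)
  obtain ⟨d', hd'⟩ : g ∣ d := Int.natCast_dvd_natCast.mp (Int.gcd_dvd_right s d)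
  obtain ⟨s₁, hs₁⟩ : (g : ℤ) ∣ s := Int.gcd_dvd_left s d
  obtain ⟨r₁, hr₁⟩ : (g : ℤ) ∣ r := gcd_dvd_of_mem_congruencePairs hdq hP₀
  have hd'q : d' ∣ q := (Dvd.intro_left g hd'.symm).trans hdq
  have : NeZero d' := ⟨by rintro rfl; simp at hd'; exact hd hd'⟩
  have hcop : IsCoprime (d' : ℤ) s₁ := by
    rw [Int.isCoprime_iff_gcd_eq_one, Int.gcd_comm]
    have h := Int.gcd_mul_left (g : ℤ) s₁ d'
    rw [← hs₁, ← Nat.cast_mul, ← hd', Int.natAbs_natCast] at h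
    exact (Nat.mul_eq_left hg.ne').mp h.symm
  have hsub : T ⊆ congruencePairs d' d' n₁ m₁ n₂ m₂ r₁ s₁ := by
    simp only [T]
    rw [hd', hs₁, hr₁]
    exact congruencePairs_mul_subset hg.ne' hd'q
  have hτ : #d'.divisors ≤ #q.divisors := card_le_card (Nat.divisors_subset_of_dvd hq hd'q)
  have hW := Nat.mul_div_le (m₁ * m₂) d'
  have hd'le := Nat.le_of_dvd (Nat.pos_of_ne_zero hq) hd'q
  calc d * #T = g * (d' * #T) := by rw [hd', mul_assoc]
    _ ≤ g * (d' * (2 * #d'.divisors * (2 * (m₁ * m₂ / d') + 1))) := by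
        gcongr
        exact (card_le_card hsub).trans
          (card_congruencePairs_le_of_isCoprime d' n₁ m₁ n₂ m₂ h₁ r₁ s₁ hcop)
    _ = g * (2 * #d'.divisors * (2 * (d' * (m₁ * m₂ / d')) + d')) := by ring
    _ ≤ g * (2 * #q.divisors * (2 * (m₁ * m₂) + q)) :=
        Nat.mul_le_mul_left g (Nat.mul_le_mul (Nat.mul_le_mul_left 2 hτ) (by omega))

noncomputable def congruenceTerm (q d n₁ m₁ n₂ m₂ : ℕ) (r s : ℤ) : ℝ :=
  if r ≠ 0 ∧ s ≠ 0 ∧ 2 * |r| ≤ (q : ℤ) ∧ 2 * |s| ≤ (q : ℤ) then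
    ((d * #(congruencePairs q d n₁ m₁ n₂ m₂ r s) : ℕ) : ℝ) * (|(r : ℝ)| * |(s : ℝ)|)⁻¹
  else 0

theorem sum_Mweight_eq_sum_congruenceTerm (q n₁ m₁ n₂ m₂ : ℕ) :
    ∑ f₁ ∈ Ioc n₁ m₁, ∑ f₂ ∈ Ioc n₂ m₂,
        (if Nat.Coprime f₁ f₂ ∧ Nat.Coprime (f₁ * f₂) q then
          Mweight q ((f₁ : ℤ) ^ 2) ((f₂ : ℤ) ^ 2) else 0) =
      ∑ d ∈ q.divisors, ∑ r ∈ Icc (-(q : ℤ)) q, ∑ s ∈ Icc (-(q : ℤ)) q,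
        congruenceTerm q d n₁ m₁ n₂ m₂ r s := by
  rw [← sum_product']
  calc _ = ∑ P ∈ Ioc n₁ m₁ ×ˢ Ioc n₂ m₂, ∑ d ∈ q.divisors, ∑ r ∈ Icc (-(q : ℤ)) q,
        ∑ s ∈ Icc (-(q : ℤ)) q,
          if ((Nat.Coprime P.1 P.2 ∧ Nat.Coprime (P.1 * P.2) q) ∧
              (d : ℤ) ∣ (P.1 : ℤ) ^ 2 * s + (P.2 : ℤ) ^ 2 * r) ∧
              (r ≠ 0 ∧ s ≠ 0 ∧ 2 * |r| ≤ (q : ℤ) ∧ 2 * |s| ≤ (q : ℤ)) then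
            (d : ℝ) * (|(r : ℝ)| * |(s : ℝ)|)⁻¹ else 0 := by
        refine sum_congr rfl fun P _ => ?_
        unfold Mweight
        split_ifs with hP
        · simp only [mul_sum, mul_ite, mul_zero]
          refine sum_congr rfl fun d _ => sum_congr rfl fun r _ => sum_congr rfl fun s _ => ?_
          exact if_congr (by tauto) rfl rfl
        · simp [hP]
    _ = ∑ d ∈ q.divisors, ∑ r ∈ Icc (-(q : ℤ)) q, ∑ s ∈ Icc (-(q : ℤ)) q,
          ∑ P ∈ Ioc n₁ m₁ ×ˢ Ioc n₂ m₂,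
          if ((Nat.Coprime P.1 P.2 ∧ Nat.Coprime (P.1 * P.2) q) ∧
              (d : ℤ) ∣ (P.1 : ℤ) ^ 2 * s + (P.2 : ℤ) ^ 2 * r) ∧
              (r ≠ 0 ∧ s ≠ 0 ∧ 2 * |r| ≤ (q : ℤ) ∧ 2 * |s| ≤ (q : ℤ)) then
            (d : ℝ) * (|(r : ℝ)| * |(s : ℝ)|)⁻¹ else 0 := by
        rw [sum_comm]
        refine sum_congr rfl fun d _ => ?_
        rw [sum_comm]
        exact sum_congr rfl fun r _ => sum_comm
    _ = _ := by
        refine sum_congr rfl fun d _ => sum_congr rfl fun r _ => sum_congr rfl fun s _ => ?_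
        rw [congruenceTerm]
        split_ifs with hrs
        · simp only [and_iff_left hrs]
          rw [← sum_filter, sum_const, nsmul_eq_mul, congruencePairs, Nat.cast_mul]
          ring
        · simp [hrs]

theorem congruenceTerm_le (q d n₁ m₁ n₂ m₂ : ℕ) (hq : q ≠ 0) (hdq : d ∣ q)
    (h₁ : m₁ ≤ 2 * n₁ + 1) (r s : ℤ) :
    congruenceTerm q d n₁ m₁ n₂ m₂ r s ≤
      2 * #q.divisors * (2 * (m₁ * m₂) + q) * ((if s ≠ 0 then |(s : ℝ)|⁻¹ else 0) *
        (Int.gcd s d * if r ≠ 0 ∧ (Int.gcd s d : ℤ) ∣ r then |(r : ℝ)|⁻¹ else 0)) := by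
  rw [congruenceTerm]
  by_cases hrs : r ≠ 0 ∧ s ≠ 0 ∧ 2 * |r| ≤ (q : ℤ) ∧ 2 * |s| ≤ (q : ℤ)
  swap
  · rw [if_neg hrs]; split_ifs <;> positivity
  rw [if_pos hrs, if_pos hrs.2.1]
  rcases (congruencePairs q d n₁ m₁ n₂ m₂ r s).eq_empty_or_nonempty with hC | ⟨P, hP⟩
  · rw [hC, card_empty, mul_zero, Nat.cast_zero, zero_mul]; split_ifs <;> positivity
  rw [if_pos ⟨hrs.1, gcd_dvd_of_mem_congruencePairs hdq hP⟩]
  have hcard := (Nat.cast_le (α := ℝ)).mpr (card_congruencePairs_le q d n₁ m₁ n₂ m₂ hq hdq h₁ r s)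
  push_cast at hcard ⊢
  calc (d : ℝ) * #(congruencePairs q d n₁ m₁ n₂ m₂ r s) * (|(r : ℝ)| * |(s : ℝ)|)⁻¹
      ≤ Int.gcd s d * (2 * #q.divisors * (2 * (m₁ * m₂) + q)) * (|(r : ℝ)| * |(s : ℝ)|)⁻¹ := by
        gcongr
    _ = _ := by rw [mul_inv]; ring

theorem sum_congruenceTerm_le (q d n₁ m₁ n₂ m₂ : ℕ) (hq : q ≠ 0) (hdq : d ∣ q)
    (h₁ : m₁ ≤ 2 * n₁ + 1) :
    ∑ r ∈ Icc (-(q : ℤ)) q, ∑ s ∈ Icc (-(q : ℤ)) q, congruenceTerm q d n₁ m₁ n₂ m₂ r s ≤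
      2 * #q.divisors * (2 * (m₁ * m₂) + q) * (2 * (harmonic q : ℝ)) ^ 2 := by
  set R := Icc (-(q : ℤ)) q
  set K : ℝ := 2 * #q.divisors * (2 * (m₁ * m₂) + q)
  set H : ℝ := (harmonic q : ℝ)
  have hd : d ≠ 0 := by rintro rfl; exact hq (zero_dvd_iff.mp hdq)
  have hr : ∀ s : ℤ, (Int.gcd s d : ℝ) *
      ∑ r ∈ R, (if r ≠ 0 ∧ (Int.gcd s d : ℤ) ∣ r then |(r : ℝ)|⁻¹ else 0) ≤ 2 * H := by
    intro s
    have hg : 0 < Int.gcd s d := Int.gcd_pos_of_ne_zero_right s (by exact_mod_cast hd)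
    rw [← sum_filter]
    calc (Int.gcd s d : ℝ) * ∑ r ∈ R with r ≠ 0 ∧ (Int.gcd s d : ℤ) ∣ r, |(r : ℝ)|⁻¹
        ≤ Int.gcd s d * (2 * H / Int.gcd s d) := by
          gcongr; exact sum_inv_abs_multiples_le q _ hg
      _ = 2 * H := by field_simp
  have hs : ∑ s ∈ R, (if s ≠ 0 then |(s : ℝ)|⁻¹ else 0) ≤ 2 * H := by
    rw [← sum_filter]
    simpa using sum_inv_abs_multiples_le q 1 one_pos
  have hH : 0 ≤ H := Rat.cast_nonneg.mpr (harmonic_pos hq).le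
  calc _ ≤ ∑ r ∈ R, ∑ s ∈ R, K * ((if s ≠ 0 then |(s : ℝ)|⁻¹ else 0) *
        (Int.gcd s d * if r ≠ 0 ∧ (Int.gcd s d : ℤ) ∣ r then |(r : ℝ)|⁻¹ else 0)) :=
        sum_le_sum fun r _ => sum_le_sum fun s _ => congruenceTerm_le q d n₁ m₁ n₂ m₂ hq hdq h₁ r s
    _ = K * ∑ s ∈ R, (if s ≠ 0 then |(s : ℝ)|⁻¹ else 0) * ((Int.gcd s d : ℝ) *
        ∑ r ∈ R, if r ≠ 0 ∧ (Int.gcd s d : ℤ) ∣ r then |(r : ℝ)|⁻¹ else 0) := by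
        rw [sum_comm, mul_sum]; simp only [mul_sum]
    _ ≤ K * ∑ s ∈ R, (if s ≠ 0 then |(s : ℝ)|⁻¹ else 0) * (2 * H) := by
        refine mul_le_mul_of_nonneg_left (sum_le_sum fun s _ => ?_) (by positivity)
        exact mul_le_mul_of_nonneg_left (hr s) (by split_ifs <;> positivity)
    _ ≤ K * (2 * H) ^ 2 := by
        rw [← sum_mul, sq]
        gcongr

theorem sum_Mweight_le (q n₁ m₁ n₂ m₂ : ℕ) (hq : q ≠ 0) (h₁ : m₁ ≤ 2 * n₁ + 1) :
    ∑ f₁ ∈ Ioc n₁ m₁, ∑ f₂ ∈ Ioc n₂ m₂,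
        (if Nat.Coprime f₁ f₂ ∧ Nat.Coprime (f₁ * f₂) q then
          Mweight q ((f₁ : ℤ) ^ 2) ((f₂ : ℤ) ^ 2) else 0) ≤
      8 * (2 * (m₁ * m₂) + q) * ((#q.divisors : ℝ) * harmonic q) ^ 2 := by
  rw [sum_Mweight_eq_sum_congruenceTerm]
  calc _ ≤ ∑ d ∈ q.divisors,
        2 * #q.divisors * (2 * (m₁ * m₂) + q) * (2 * (harmonic q : ℝ)) ^ 2 :=
        sum_le_sum fun d hd =>
          sum_congruenceTerm_le q d n₁ m₁ n₂ m₂ hq (Nat.dvd_of_mem_divisors hd) h₁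
    _ = _ := by rw [sum_const, nsmul_eq_mul]; ring

theorem Nat.floor_two_mul_le {x : ℝ} (hx : 0 ≤ x) : ⌊2 * x⌋₊ ≤ 2 * ⌊x⌋₊ + 1 := by
  have : ⌊2 * x⌋₊ < 2 * ⌊x⌋₊ + 2 := by
    rw [Nat.floor_lt (by positivity)]
    push_cast
    linarith [Nat.lt_floor_add_one x]
  omega

theorem stmt11 (ε : ℝ) (hε : 0 < ε) :
    ∃ C : ℝ, ∀ (F₁ F₂ : ℝ) (q : ℕ), (1 : ℝ) / 2 ≤ F₁ → (1 : ℝ) / 2 ≤ F₂ → 0 < q →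
      ∑ f₁ ∈ Finset.Ioc ⌊F₁⌋₊ ⌊2 * F₁⌋₊, ∑ f₂ ∈ Finset.Ioc ⌊F₂⌋₊ ⌊2 * F₂⌋₊,
        (if Nat.Coprime f₁ f₂ ∧ Nat.Coprime (f₁ * f₂) q then
          Mweight q ((f₁ : ℤ) ^ 2) ((f₂ : ℤ) ^ 2) else 0) ≤
      C * (q : ℝ) ^ ε * (F₁ * F₂ + q) := by
  obtain ⟨C, hC⟩ := exists_card_divisors_mul_harmonic_sq_le hε
  refine ⟨64 * C, fun F₁ F₂ q hF₁ hF₂ hq => ?_⟩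
  have hCq := hC q hq.ne'
  have hCq0 : 0 ≤ C * (q : ℝ) ^ ε := (sq_nonneg _).trans hCq
  have hbox : (⌊2 * F₁⌋₊ : ℝ) * ⌊2 * F₂⌋₊ ≤ (2 * F₁) * (2 * F₂) :=
    mul_le_mul (Nat.floor_le (by linarith)) (Nat.floor_le (by linarith)) (by positivity)
      (by linarith)
  calc _ ≤ 8 * (2 * (⌊2 * F₁⌋₊ * ⌊2 * F₂⌋₊) + q) * ((#q.divisors : ℝ) * harmonic q) ^ 2 :=
        sum_Mweight_le q _ _ _ _ hq.ne' (Nat.floor_two_mul_le (by linarith))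
    _ ≤ 8 * (2 * ((2 * F₁) * (2 * F₂)) + q) * (C * (q : ℝ) ^ ε) := by gcongr
    _ ≤ 64 * C * (q : ℝ) ^ ε * (F₁ * F₂ + q) := by nlinarith
end

section
/- For all real x ≥ 1, all positive integers q ≤ x, and every bijection γ of (ℤ/qℤ)^×, one has 0 ≤ T(x;q) − T_γ(x;q) ≤ 2 V(x;q). -/
open ArithmeticFunction Finset
open scoped ArithmeticFunction.Moebius

/-- `Scount x q a` is the number of squarefree integers `n ≤ x` with `n ≡ a (mod q)`,
written as `∑_{n ≤ x, n ≡ a (q)} |μ(n)|`. -/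
noncomputable def Scount (x : ℝ) (q : ℕ) (a : ZMod q) : ℝ :=
  ∑ n ∈ Finset.Icc 1 ⌊x⌋₊, if (n : ZMod q) = a then |((μ n : ℤ) : ℝ)| else 0

/-- `cConst q = ∏_{p prime, p ∤ q} (1 - 1/p²)`. -/
noncomputable def cConst (q : ℕ) : ℝ :=
  ∏' p : {p : ℕ // p.Prime ∧ ¬ (p ∣ q)}, (1 - 1 / ((p : ℕ) : ℝ) ^ 2)

/-- The error term `E(x;q,a) = S(x;q,a) - c_q · x/q`. -/
noncomputable def Err (x : ℝ) (q : ℕ) (a : ZMod q) : ℝ :=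
  Scount x q a - cConst q * x / q

/-- The variance `V(x;q) = ∑_{a ∈ (ℤ/qℤ)ˣ} E(x;q,a)²`. -/
noncomputable def Var (x : ℝ) (q : ℕ) : ℝ :=
  ∑ a ∈ (Finset.range q).filter (fun a => Nat.Coprime a q), (Err x q (a : ZMod q)) ^ 2

/-- `Tcount x q = ∑_{n₁,n₂ ≤ x, gcd(n₁,q)=gcd(n₂,q)=1, n₁ ≡ n₂ (mod q)} |μ(n₁)| |μ(n₂)|`. -/
noncomputable def Tcount (x : ℝ) (q : ℕ) : ℝ :=
  ∑ n₁ ∈ Finset.Icc 1 ⌊x⌋₊, ∑ n₂ ∈ Finset.Icc 1 ⌊x⌋₊,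
    if Nat.Coprime n₁ q ∧ Nat.Coprime n₂ q ∧ (n₁ : ZMod q) = (n₂ : ZMod q) then
      |((μ n₁ : ℤ) : ℝ)| * |((μ n₂ : ℤ) : ℝ)| else 0

/-- `Qcount x q = ∑_{n ≤ x, gcd(n,q)=1} |μ(n)|`, the number of squarefree `n ≤ x`
coprime to `q`. -/
noncomputable def Qcount (x : ℝ) (q : ℕ) : ℝ :=
  ∑ n ∈ Finset.Icc 1 ⌊x⌋₊, if Nat.Coprime n q then |((μ n : ℤ) : ℝ)| else 0


/-- `Tgamma x q γ = ∑_{n₁,n₂ ≤ x, gcd(n₁,q)=gcd(n₂,q)=1, n₁ ≡ γ(n₂) (mod q)}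
|μ(n₁)| |μ(n₂)|`, where `γ` is a map of `(ℤ/qℤ)ˣ`. -/
noncomputable def Tgamma (x : ℝ) (q : ℕ) (γ : (ZMod q)ˣ → (ZMod q)ˣ) : ℝ :=
  ∑ n₁ ∈ Finset.Icc 1 ⌊x⌋₊, ∑ n₂ ∈ Finset.Icc 1 ⌊x⌋₊,
    if h : Nat.Coprime n₁ q ∧ Nat.Coprime n₂ q then
      (if (n₁ : ZMod q) = (γ (ZMod.unitOfCoprime n₂ h.2) : ZMod q) then
        |((μ n₁ : ℤ) : ℝ)| * |((μ n₂ : ℤ) : ℝ)| else 0)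
    else 0

/-! Writing `S(a) = S(x;q,a)`, one has `T = ∑_a S(a)²` and `T_γ = ∑_a S(γ a) S(a)`,
the sums running over `(ℤ/qℤ)ˣ`. Since `γ` permutes the residues,
`2 (T - T_γ) = ∑_a (S(a) - S(γ a))²`, which is nonnegative. The main term `c_q x / q` does not
depend on `a`, so it cancels in `S(a) - S(γ a)`, and `(E(a) - E(γ a))² ≤ 2 E(a)² + 2 E(γ a)²`
summed over `a` gives `4 V`. -/

section Permutation

variable {ι R : Type*} [Fintype ι]

theorem two_mul_sum_sq_sub_sum_mul_comp_eq [CommRing R] {σ : ι → ι} (hσ : σ.Bijective)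
    (f : ι → R) :
    2 * (∑ i, f i ^ 2 - ∑ i, f (σ i) * f i) = ∑ i, (f i - f (σ i)) ^ 2 := by
  have hsq : ∑ i, f (σ i) ^ 2 = ∑ i, f i ^ 2 := hσ.sum_comp (fun i => f i ^ 2)
  calc 2 * (∑ i, f i ^ 2 - ∑ i, f (σ i) * f i)
      = ∑ i, f i ^ 2 + ∑ i, f (σ i) ^ 2 - 2 * ∑ i, f (σ i) * f i := by rw [hsq]; ring
    _ = ∑ i, (f i - f (σ i)) ^ 2 := by
      rw [mul_sum, ← sum_add_distrib, ← sum_sub_distrib]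
      exact sum_congr rfl fun i _ => by ring

theorem sum_sub_comp_sq_le [CommRing R] [LinearOrder R] [IsStrictOrderedRing R]
    {σ : ι → ι} (hσ : σ.Bijective) (f : ι → R) :
    ∑ i, (f i - f (σ i)) ^ 2 ≤ 4 * ∑ i, f i ^ 2 :=
  calc ∑ i, (f i - f (σ i)) ^ 2
      ≤ ∑ i, (2 * f i ^ 2 + 2 * f (σ i) ^ 2) :=
        sum_le_sum fun i _ => by nlinarith [sq_nonneg (f i + f (σ i))]
    _ = 4 * ∑ i, f i ^ 2 := by
      rw [sum_add_distrib, ← mul_sum, ← mul_sum, hσ.sum_comp (fun i => f i ^ 2)]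
      ring

end Permutation

section UnitsSums

variable {q : ℕ}

theorem coprime_of_natCast_eq_unit {n : ℕ} {u : (ZMod q)ˣ} (h : (n : ZMod q) = u) :
    n.Coprime q :=
  (ZMod.isUnit_iff_coprime n q).mp (h ▸ u.isUnit)

variable [NeZero q]

theorem sum_range_filter_coprime_eq_sum_units {M : Type*} [AddCommMonoid M] (g : ZMod q → M) :
    ∑ a ∈ (range q).filter (·.Coprime q), g a = ∑ u : (ZMod q)ˣ, g u := by
  refine sum_bij' (fun a ha => ZMod.unitOfCoprime a (mem_filter.mp ha).2)
    (fun u _ => (u : ZMod q).val) (fun _ _ => mem_univ _) (fun u _ => ?_) (fun a ha => ?_)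
    (fun u _ => ?_) (fun a _ => by rw [ZMod.coe_unitOfCoprime])
  · exact mem_filter.mpr ⟨mem_range.mpr (ZMod.val_lt _), ZMod.val_coe_unit_coprime u⟩
  · simp only [ZMod.coe_unitOfCoprime]
    exact ZMod.val_cast_of_lt (mem_range.mp (mem_filter.mp ha).1)
  · ext
    simp

theorem sum_units_ite_natCast_eq {M : Type*} [AddCommMonoid M] (n : ℕ) (g : (ZMod q)ˣ → M) :
    ∑ a : (ZMod q)ˣ, (if (n : ZMod q) = a then g a else 0) =
      if h : n.Coprime q then g (ZMod.unitOfCoprime n h) else 0 := by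
  split_ifs with h
  · have hiff : ∀ a : (ZMod q)ˣ, (n : ZMod q) = a ↔ ZMod.unitOfCoprime n h = a := fun a => by
      rw [Units.ext_iff, ZMod.coe_unitOfCoprime]
    simp only [hiff, Fintype.sum_ite_eq]
  · exact sum_eq_zero fun a _ => if_neg fun ha => h (coprime_of_natCast_eq_unit ha)

end UnitsSums

theorem Tcount_eq_Tgamma_id (x : ℝ) (q : ℕ) : Tcount x q = Tgamma x q id := by
  refine sum_congr rfl fun n₁ _ => sum_congr rfl fun n₂ _ => ?_
  by_cases h : n₁.Coprime q ∧ n₂.Coprime q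
  · rw [dif_pos h, id, ZMod.coe_unitOfCoprime]
    exact if_congr ⟨fun h' => h'.2.2, fun e => ⟨h.1, h.2, e⟩⟩ rfl rfl
  · rw [dif_neg h, if_neg fun h' => h ⟨h'.1, h'.2.1⟩]

theorem Tgamma_eq_sum_units (x : ℝ) (q : ℕ) [NeZero q] (γ : (ZMod q)ˣ → (ZMod q)ˣ) :
    Tgamma x q γ = ∑ a : (ZMod q)ˣ, Scount x q (γ a) * Scount x q a := by
  simp only [Scount, sum_mul_sum]
  rw [sum_comm]
  refine sum_congr rfl fun n₁ _ => ?_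
  rw [sum_comm]
  refine sum_congr rfl fun n₂ _ => ?_
  simp only [mul_ite, mul_zero, ite_mul, zero_mul]
  rw [sum_units_ite_natCast_eq]
  by_cases h₂ : n₂.Coprime q
  · by_cases h₁ : n₁.Coprime q
    · rw [dif_pos ⟨h₁, h₂⟩, dif_pos h₂]
    · rw [dif_neg fun h => h₁ h.1, dif_pos h₂,
        if_neg fun e => h₁ (coprime_of_natCast_eq_unit e)]
  · rw [dif_neg fun h => h₂ h.2, dif_neg h₂]

theorem Tcount_eq_sum_units (x : ℝ) (q : ℕ) [NeZero q] :
    Tcount x q = ∑ a : (ZMod q)ˣ, Scount x q a ^ 2 := by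
  simp only [Tcount_eq_Tgamma_id, Tgamma_eq_sum_units, id, sq]

theorem Var_eq_sum_units (x : ℝ) (q : ℕ) [NeZero q] :
    Var x q = ∑ a : (ZMod q)ˣ, Err x q a ^ 2 :=
  sum_range_filter_coprime_eq_sum_units (fun a => Err x q a ^ 2)

theorem stmt15_general (x : ℝ) (q : ℕ) (hq : 0 < q)
    (γ : (ZMod q)ˣ → (ZMod q)ˣ) (hγ : Function.Bijective γ) :
    0 ≤ Tcount x q - Tgamma x q γ ∧ Tcount x q - Tgamma x q γ ≤ 2 * Var x q := by
  have : NeZero q := ⟨hq.ne'⟩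
  have hdiff : 2 * (Tcount x q - Tgamma x q γ) =
      ∑ a : (ZMod q)ˣ, (Err x q a - Err x q (γ a)) ^ 2 := by
    rw [Tcount_eq_sum_units, Tgamma_eq_sum_units,
      two_mul_sum_sq_sub_sum_mul_comp_eq hγ (fun a : (ZMod q)ˣ => Scount x q a)]
    simp only [Err, sub_sub_sub_cancel_right]
  have hle := sum_sub_comp_sq_le hγ (fun a : (ZMod q)ˣ => Err x q a)
  rw [← Var_eq_sum_units, ← hdiff] at hle
  have hnn : 0 ≤ ∑ a : (ZMod q)ˣ, (Err x q a - Err x q (γ a)) ^ 2 :=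
    sum_nonneg fun _ _ => sq_nonneg _
  constructor <;> linarith

theorem stmt15 (x : ℝ) (q : ℕ) (hx : 1 ≤ x) (hq : 0 < q) (hqx : (q : ℝ) ≤ x)
    (γ : (ZMod q)ˣ → (ZMod q)ˣ) (hγ : Function.Bijective γ) :
    0 ≤ Tcount x q - Tgamma x q γ ∧ Tcount x q - Tgamma x q γ ≤ 2 * Var x q :=
  stmt15_general x q hq γ hγ
end

section
/- For all real x ≥ 1 and all positive integers q, one has Σ_{(d₁,d₂,e,f₁,f₂) ∈ ℤ_{≥1}⁵ : d₁ e² f₁² ≤ x, d₂ e² f₂² ≤ x, gcd(f₁,f₂) = 1, gcd(d₁ d₂ e f₁ f₂, q) = 1} μ(e f₁) μ(e f₂) = (Σ_{n ≤ x, gcd(n,q)=1} |μ(n)|)², where μ is the Möbius function. -/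
open ArithmeticFunction Finset
open scoped ArithmeticFunction.Moebius


lemma sum_div_moebius (n : ℕ) : ∑ d ∈ n.divisors, μ d = if n = 1 then 1 else 0 := by
  rw [← coe_mul_zeta_apply, moebius_mul_coe_zeta, one_apply]

lemma dvd_of_sq_dvd {s m k : ℕ} (hs : Squarefree s) (hm : m ≠ 0) (h : k ^ 2 ∣ s * m ^ 2) :
    k ∣ m := by
  have hs0 : s ≠ 0 := hs.ne_zero
  have hk : k ≠ 0 := by
    rintro rfl
    simp at h
    rcases h with h | h
    · exact hs0 h
    · exact hm h
  rw [← Nat.factorization_le_iff_dvd hk hm]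
  have h2 : (k ^ 2).factorization ≤ (s * m ^ 2).factorization :=
    (Nat.factorization_le_iff_dvd (by positivity) (by positivity)).2 h
  intro p
  have h3 := h2 p
  rw [Nat.factorization_pow, Nat.factorization_mul hs0 (by positivity),
    Nat.factorization_pow] at h3
  have h4 : s.factorization p ≤ 1 := hs.natFactorization_le_one p
  simp only [Finsupp.coe_add, Finsupp.coe_smul, Pi.add_apply, Pi.smul_apply, smul_eq_mul] at h3
  omega

lemma sq_indicator {N n : ℕ} (hn : n ≠ 0) (hnN : n ≤ N) :
    (∑ k ∈ Icc 1 N, if k ^ 2 ∣ n then (μ k : ℤ) else 0) =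
      if Squarefree n then 1 else 0 := by
  obtain ⟨a, b, hab, ha⟩ := Nat.sq_mul_squarefree n
  have hb : b ≠ 0 := by rintro rfl; simp at hab; omega
  have hbN : b ≤ N := by
    calc b ≤ b ^ 2 * a := by
          have : 1 ≤ a := Nat.one_le_iff_ne_zero.2 (by rintro rfl; simp at hab; omega)
          calc b ≤ b ^ 2 := Nat.le_self_pow two_ne_zero b
          _ ≤ b ^ 2 * a := Nat.le_mul_of_pos_right _ this
      _ = n := hab
      _ ≤ N := hnN
  have hiff : ∀ k, k ^ 2 ∣ n ↔ k ∣ b := by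
    intro k
    constructor
    · intro h
      exact dvd_of_sq_dvd ha hb (by rw [mul_comm, hab]; exact h)
    · intro h
      calc k ^ 2 ∣ b ^ 2 := pow_dvd_pow_of_dvd h 2
        _ ∣ n := hab ▸ Dvd.intro a rfl
  rw [← Finset.sum_filter]
  have hset : (Icc 1 N).filter (fun k => k ^ 2 ∣ n) = b.divisors := by
    ext k
    simp only [mem_filter, mem_Icc, Nat.mem_divisors, hiff]
    constructor
    · rintro ⟨_, hk⟩; exact ⟨hk, hb⟩
    · rintro ⟨hk, -⟩
      refine ⟨⟨Nat.one_le_iff_ne_zero.2 ?_, le_trans (Nat.le_of_dvd (Nat.pos_of_ne_zero hb) hk) hbN⟩, hk⟩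
      rintro rfl; exact hb (Nat.eq_zero_of_zero_dvd hk)
  rw [hset, sum_div_moebius]
  congr 1
  rw [eq_iff_iff]
  constructor
  · rintro rfl; rw [← hab]; simpa using ha
  · intro hsf
    have : b * b ∣ n := by rw [← pow_two]; exact hab ▸ Dvd.intro a rfl
    exact Nat.isUnit_iff.1 (hsf b this)


lemma keyC (N q : ℕ) :
    (∑ d₁ ∈ Icc 1 N, ∑ d₂ ∈ Icc 1 N, ∑ e ∈ Icc 1 N, ∑ f₁ ∈ Icc 1 N, ∑ f₂ ∈ Icc 1 N,
      if d₁ * e ^ 2 * f₁ ^ 2 ≤ N ∧ d₂ * e ^ 2 * f₂ ^ 2 ≤ N ∧ Nat.Coprime f₁ f₂ ∧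
          Nat.Coprime (d₁ * d₂ * e * f₁ * f₂) q then
        ((μ (e * f₁) : ℤ) : ℝ) * ((μ (e * f₂) : ℤ) : ℝ) else 0) =
    (∑ k ∈ Icc 1 N, ∑ c ∈ Icc 1 N,
      if k ^ 2 * c ≤ N ∧ Nat.Coprime (k * c) q then ((μ k : ℤ) : ℝ) else 0) *
    (∑ k ∈ Icc 1 N, ∑ c ∈ Icc 1 N,
      if k ^ 2 * c ≤ N ∧ Nat.Coprime (k * c) q then ((μ k : ℤ) : ℝ) else 0) := by
  classical
  set T : Finset (ℕ × ℕ) := ((Icc 1 N) ×ˢ (Icc 1 N)).filter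
    (fun p => p.1 ^ 2 * p.2 ≤ N ∧ Nat.Coprime (p.1 * p.2) q) with hT
  have hS : (∑ k ∈ Icc 1 N, ∑ c ∈ Icc 1 N,
      if k ^ 2 * c ≤ N ∧ Nat.Coprime (k * c) q then ((μ k : ℤ) : ℝ) else 0) =
      ∑ p ∈ T, ((μ p.1 : ℤ) : ℝ) := by
    rw [hT, Finset.sum_filter, Finset.sum_product]
  set s5 : Finset (ℕ × ℕ × ℕ × ℕ × ℕ) :=
    ((Icc 1 N) ×ˢ ((Icc 1 N) ×ˢ ((Icc 1 N) ×ˢ ((Icc 1 N) ×ˢ (Icc 1 N))))).filter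
      (fun p => p.1 * p.2.2.1 ^ 2 * p.2.2.2.1 ^ 2 ≤ N ∧
        p.2.1 * p.2.2.1 ^ 2 * p.2.2.2.2 ^ 2 ≤ N ∧
        Nat.Coprime p.2.2.2.1 p.2.2.2.2 ∧
        Nat.Coprime (p.1 * p.2.1 * p.2.2.1 * p.2.2.2.1 * p.2.2.2.2) q) with hs5
  have hL : (∑ d₁ ∈ Icc 1 N, ∑ d₂ ∈ Icc 1 N, ∑ e ∈ Icc 1 N, ∑ f₁ ∈ Icc 1 N, ∑ f₂ ∈ Icc 1 N,
      if d₁ * e ^ 2 * f₁ ^ 2 ≤ N ∧ d₂ * e ^ 2 * f₂ ^ 2 ≤ N ∧ Nat.Coprime f₁ f₂ ∧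
          Nat.Coprime (d₁ * d₂ * e * f₁ * f₂) q then
        ((μ (e * f₁) : ℤ) : ℝ) * ((μ (e * f₂) : ℤ) : ℝ) else 0) =
      ∑ p ∈ s5, ((μ (p.2.2.1 * p.2.2.2.1) : ℤ) : ℝ) * ((μ (p.2.2.1 * p.2.2.2.2) : ℤ) : ℝ) := by
    rw [hs5, Finset.sum_filter]
    simp only [Finset.sum_product]
  have hR : (∑ p ∈ T, ((μ p.1 : ℤ) : ℝ)) * (∑ p ∈ T, ((μ p.1 : ℤ) : ℝ)) =
      ∑ z ∈ T ×ˢ T, ((μ z.1.1 : ℤ) : ℝ) * ((μ z.2.1 : ℤ) : ℝ) := by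
    rw [Finset.sum_mul_sum, Finset.sum_product]
  rw [hL, hS, hR]
  apply Finset.sum_nbij'
    (fun p => ((p.2.2.1 * p.2.2.2.1, p.1), (p.2.2.1 * p.2.2.2.2, p.2.1)))
    (fun z => (z.1.2, z.2.2, Nat.gcd z.1.1 z.2.1,
      z.1.1 / Nat.gcd z.1.1 z.2.1, z.2.1 / Nat.gcd z.1.1 z.2.1))
  · rintro ⟨d₁, d₂, e, f₁, f₂⟩ hp
    simp only [hs5, hT, mem_filter, mem_product, mem_Icc] at hp ⊢
    obtain ⟨⟨⟨hd₁1, hd₁N⟩, ⟨hd₂1, hd₂N⟩, ⟨he1, heN⟩, ⟨hf₁1, hf₁N⟩, ⟨hf₂1, hf₂N⟩⟩,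
      h1, h2, hff, hcop⟩ := hp
    have hef₁ : 1 ≤ e * f₁ := Nat.mul_pos he1 hf₁1
    have hef₂ : 1 ≤ e * f₂ := Nat.mul_pos he1 hf₂1
    have heq1 : (e * f₁) ^ 2 * d₁ = d₁ * e ^ 2 * f₁ ^ 2 := by ring
    have heq2 : (e * f₂) ^ 2 * d₂ = d₂ * e ^ 2 * f₂ ^ 2 := by ring
    have hef₁N : e * f₁ ≤ N := by
      calc e * f₁ ≤ (e * f₁) ^ 2 := Nat.le_self_pow two_ne_zero _
        _ ≤ (e * f₁) ^ 2 * d₁ := Nat.le_mul_of_pos_right _ hd₁1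
        _ ≤ N := by rw [heq1]; exact h1
    have hef₂N : e * f₂ ≤ N := by
      calc e * f₂ ≤ (e * f₂) ^ 2 := Nat.le_self_pow two_ne_zero _
        _ ≤ (e * f₂) ^ 2 * d₂ := Nat.le_mul_of_pos_right _ hd₂1
        _ ≤ N := by rw [heq2]; exact h2
    refine ⟨⟨⟨⟨hef₁, hef₁N⟩, hd₁1, hd₁N⟩, by rw [heq1]; exact h1, ?_⟩,
      ⟨⟨⟨hef₂, hef₂N⟩, hd₂1, hd₂N⟩, by rw [heq2]; exact h2, ?_⟩⟩
    · exact Nat.Coprime.coprime_dvd_left ⟨d₂ * f₂, by ring⟩ hcop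
    · exact Nat.Coprime.coprime_dvd_left ⟨d₁ * f₁, by ring⟩ hcop
  · rintro ⟨⟨k₁, c₁⟩, ⟨k₂, c₂⟩⟩ hz
    simp only [hs5, hT, mem_filter, mem_product, mem_Icc] at hz ⊢
    obtain ⟨⟨⟨⟨hk₁1, hk₁N⟩, hc₁1, hc₁N⟩, hle₁, hcop₁⟩,
      ⟨⟨⟨hk₂1, hk₂N⟩, hc₂1, hc₂N⟩, hle₂, hcop₂⟩⟩ := hz
    set e := Nat.gcd k₁ k₂ with hedef
    have he : 0 < e := Nat.gcd_pos_of_pos_left _ hk₁1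
    have he1 : e ∣ k₁ := Nat.gcd_dvd_left _ _
    have he2 : e ∣ k₂ := Nat.gcd_dvd_right _ _
    have hek₁ : e * (k₁ / e) = k₁ := Nat.mul_div_cancel' he1
    have hek₂ : e * (k₂ / e) = k₂ := Nat.mul_div_cancel' he2
    have heN : e ≤ N := le_trans (Nat.le_of_dvd hk₁1 he1) hk₁N
    have hf₁1 : 1 ≤ k₁ / e := (Nat.one_le_div_iff he).2 (Nat.le_of_dvd hk₁1 he1)
    have hf₂1 : 1 ≤ k₂ / e := (Nat.one_le_div_iff he).2 (Nat.le_of_dvd hk₂1 he2)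
    have hf₁N : k₁ / e ≤ N := le_trans (Nat.div_le_self _ _) hk₁N
    have hf₂N : k₂ / e ≤ N := le_trans (Nat.div_le_self _ _) hk₂N
    rw [Nat.coprime_mul_iff_left] at hcop₁ hcop₂
    have hcope : Nat.Coprime e q := Nat.Coprime.coprime_dvd_left he1 hcop₁.1
    have hcopf₁ : Nat.Coprime (k₁ / e) q :=
      Nat.Coprime.coprime_dvd_left (Nat.div_dvd_of_dvd he1) hcop₁.1
    have hcopf₂ : Nat.Coprime (k₂ / e) q :=
      Nat.Coprime.coprime_dvd_left (Nat.div_dvd_of_dvd he2) hcop₂.1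
    refine ⟨⟨⟨hc₁1, hc₁N⟩, ⟨hc₂1, hc₂N⟩, ⟨he, heN⟩, ⟨hf₁1, hf₁N⟩, hf₂1, hf₂N⟩,
      ?_, ?_, Nat.coprime_div_gcd_div_gcd he, ?_⟩
    · calc c₁ * e ^ 2 * (k₁ / e) ^ 2 = (e * (k₁ / e)) ^ 2 * c₁ := by ring
        _ = k₁ ^ 2 * c₁ := by rw [hek₁]
        _ ≤ N := hle₁
    · calc c₂ * e ^ 2 * (k₂ / e) ^ 2 = (e * (k₂ / e)) ^ 2 * c₂ := by ring
        _ = k₂ ^ 2 * c₂ := by rw [hek₂]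
        _ ≤ N := hle₂
    · exact ((((hcop₁.2.mul hcop₂.2).mul hcope).mul hcopf₁).mul hcopf₂)
  · rintro ⟨d₁, d₂, e, f₁, f₂⟩ hp
    simp only [hs5, mem_filter, mem_product, mem_Icc] at hp
    obtain ⟨⟨⟨hd₁1, -⟩, -, ⟨he1, -⟩, -, -⟩, -, -, hff, -⟩ := hp
    have hg : Nat.gcd (e * f₁) (e * f₂) = e := by
      rw [Nat.gcd_mul_left, hff, mul_one]
    simp only [hg]
    rw [Nat.mul_div_cancel_left _ he1, Nat.mul_div_cancel_left _ he1]
  · rintro ⟨⟨k₁, c₁⟩, ⟨k₂, c₂⟩⟩ hz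
    simp only [hT, mem_filter, mem_product, mem_Icc] at hz
    obtain ⟨⟨⟨⟨hk₁1, -⟩, -⟩, -, -⟩, ⟨⟨⟨hk₂1, -⟩, -⟩, -, -⟩⟩ := hz
    have he1 : Nat.gcd k₁ k₂ ∣ k₁ := Nat.gcd_dvd_left _ _
    have he2 : Nat.gcd k₁ k₂ ∣ k₂ := Nat.gcd_dvd_right _ _
    simp only [Nat.mul_div_cancel' he1, Nat.mul_div_cancel' he2]
  · rintro ⟨d₁, d₂, e, f₁, f₂⟩ _
    rfl


lemma qcount_eq (x : ℝ) (q : ℕ) :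
    Qcount x q = ∑ k ∈ Icc 1 ⌊x⌋₊, ∑ c ∈ Icc 1 ⌊x⌋₊,
      if k ^ 2 * c ≤ ⌊x⌋₊ ∧ Nat.Coprime (k * c) q then ((μ k : ℤ) : ℝ) else 0 := by
  set N := ⌊x⌋₊ with hNdef
  have step1 : Qcount x q = ∑ n ∈ Icc 1 N, ∑ k ∈ Icc 1 N,
      if k ^ 2 ∣ n ∧ Nat.Coprime n q then ((μ k : ℤ) : ℝ) else 0 := by
    unfold Qcount
    apply Finset.sum_congr rfl
    intro n hn
    rw [mem_Icc] at hn
    by_cases hc : Nat.Coprime n q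
    · rw [if_pos hc]
      have h1 := sq_indicator (N := N) (n := n) (by omega) hn.2
      have h2 : ((∑ k ∈ Icc 1 N, if k ^ 2 ∣ n then (μ k : ℤ) else 0 : ℤ) : ℝ) =
          ∑ k ∈ Icc 1 N, if k ^ 2 ∣ n ∧ Nat.Coprime n q then ((μ k : ℤ) : ℝ) else 0 := by
        push_cast
        refine Finset.sum_congr rfl fun k _ => ?_
        by_cases h : k ^ 2 ∣ n
        · rw [if_pos h, if_pos ⟨h, hc⟩]
        · rw [if_neg h, if_neg fun hh => h hh.1]
      rw [← h2, h1]
      have h3 : |((μ n : ℤ) : ℝ)| = ((|μ n| : ℤ) : ℝ) := by push_cast; rfl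
      rw [h3, abs_moebius]
    · simp [hc]
  rw [step1]
  rw [← Finset.sum_product' (s := Icc 1 N) (t := Icc 1 N)
    (f := fun n k => if k ^ 2 ∣ n ∧ Nat.Coprime n q then ((μ k : ℤ) : ℝ) else 0)]
  rw [← Finset.sum_product' (s := Icc 1 N) (t := Icc 1 N)
    (f := fun k c => if k ^ 2 * c ≤ N ∧ Nat.Coprime (k * c) q then ((μ k : ℤ) : ℝ) else 0)]
  rw [← Finset.sum_filter, ← Finset.sum_filter]
  apply Finset.sum_nbij' (fun p => (p.2, p.1 / p.2 ^ 2)) (fun p => (p.1 ^ 2 * p.2, p.1))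
  · rintro ⟨n, k⟩ hp
    simp only [mem_filter, mem_product, mem_Icc] at hp ⊢
    obtain ⟨⟨⟨hn1, hnN⟩, hk1, hkN⟩, hdvd, hcop⟩ := hp
    have hk2 : 0 < k ^ 2 := by positivity
    have hle : k ^ 2 ≤ n := Nat.le_of_dvd (by omega) hdvd
    have hch : k ^ 2 * (n / k ^ 2) = n := Nat.mul_div_cancel' hdvd
    refine ⟨⟨⟨hk1, hkN⟩, ?_, ?_⟩, ?_, ?_⟩
    · exact Nat.one_le_div_iff hk2 |>.2 hle
    · exact le_trans (Nat.div_le_self _ _) hnN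
    · rw [hch]; exact hnN
    · apply Nat.Coprime.coprime_dvd_left _ hcop
      calc k * (n / k ^ 2) ∣ k * (n / k ^ 2) * k := Dvd.intro k rfl
        _ = k ^ 2 * (n / k ^ 2) := by ring
        _ = n := hch
  · rintro ⟨k, c⟩ hp
    simp only [mem_filter, mem_product, mem_Icc] at hp ⊢
    obtain ⟨⟨⟨hk1, hkN⟩, hc1, hcN⟩, hle, hcop⟩ := hp
    rw [Nat.coprime_mul_iff_left] at hcop
    refine ⟨⟨⟨?_, hle⟩, hk1, hkN⟩, Dvd.intro c rfl, ?_⟩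
    · have : 0 < k ^ 2 * c := by positivity
      omega
    · exact Nat.Coprime.mul (hcop.1.pow_left 2) hcop.2
  · rintro ⟨n, k⟩ hp
    simp only [mem_filter, mem_product, mem_Icc] at hp
    obtain ⟨-, hdvd, -⟩ := hp
    simp [Nat.mul_div_cancel' hdvd]
  · rintro ⟨k, c⟩ hp
    simp only [mem_filter, mem_product, mem_Icc] at hp
    obtain ⟨⟨⟨hk1, -⟩, -⟩, -, -⟩ := hp
    have : 0 < k ^ 2 := by positivity
    simp [Nat.mul_div_cancel_left _ this]
  · rintro ⟨n, k⟩ _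
    rfl

theorem stmt17 (x : ℝ) (q : ℕ) (hx : 1 ≤ x) (hq : 0 < q) :
    (∑ d₁ ∈ Finset.Icc 1 ⌊x⌋₊, ∑ d₂ ∈ Finset.Icc 1 ⌊x⌋₊, ∑ e ∈ Finset.Icc 1 ⌊x⌋₊,
      ∑ f₁ ∈ Finset.Icc 1 ⌊x⌋₊, ∑ f₂ ∈ Finset.Icc 1 ⌊x⌋₊,
        if ((d₁ * e ^ 2 * f₁ ^ 2 : ℕ) : ℝ) ≤ x ∧ ((d₂ * e ^ 2 * f₂ ^ 2 : ℕ) : ℝ) ≤ x ∧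
            Nat.Coprime f₁ f₂ ∧ Nat.Coprime (d₁ * d₂ * e * f₁ * f₂) q then
          ((μ (e * f₁) : ℤ) : ℝ) * ((μ (e * f₂) : ℤ) : ℝ) else 0) =
      (Qcount x q) ^ 2 := by
  have hx0 : (0 : ℝ) ≤ x := le_trans zero_le_one hx
  have hstep : (∑ d₁ ∈ Finset.Icc 1 ⌊x⌋₊, ∑ d₂ ∈ Finset.Icc 1 ⌊x⌋₊, ∑ e ∈ Finset.Icc 1 ⌊x⌋₊,
      ∑ f₁ ∈ Finset.Icc 1 ⌊x⌋₊, ∑ f₂ ∈ Finset.Icc 1 ⌊x⌋₊,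
        if ((d₁ * e ^ 2 * f₁ ^ 2 : ℕ) : ℝ) ≤ x ∧ ((d₂ * e ^ 2 * f₂ ^ 2 : ℕ) : ℝ) ≤ x ∧
            Nat.Coprime f₁ f₂ ∧ Nat.Coprime (d₁ * d₂ * e * f₁ * f₂) q then
          ((μ (e * f₁) : ℤ) : ℝ) * ((μ (e * f₂) : ℤ) : ℝ) else 0) =
      (∑ d₁ ∈ Icc 1 ⌊x⌋₊, ∑ d₂ ∈ Icc 1 ⌊x⌋₊, ∑ e ∈ Icc 1 ⌊x⌋₊, ∑ f₁ ∈ Icc 1 ⌊x⌋₊,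
        ∑ f₂ ∈ Icc 1 ⌊x⌋₊,
        if d₁ * e ^ 2 * f₁ ^ 2 ≤ ⌊x⌋₊ ∧ d₂ * e ^ 2 * f₂ ^ 2 ≤ ⌊x⌋₊ ∧ Nat.Coprime f₁ f₂ ∧
            Nat.Coprime (d₁ * d₂ * e * f₁ * f₂) q then
          ((μ (e * f₁) : ℤ) : ℝ) * ((μ (e * f₂) : ℤ) : ℝ) else 0) := by
    refine Finset.sum_congr rfl fun d₁ _ => Finset.sum_congr rfl fun d₂ _ =>
      Finset.sum_congr rfl fun e _ => Finset.sum_congr rfl fun f₁ _ =>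
      Finset.sum_congr rfl fun f₂ _ => ?_
    refine if_congr ?_ rfl rfl
    rw [← Nat.le_floor_iff hx0, ← Nat.le_floor_iff hx0]
  rw [hstep, keyC ⌊x⌋₊ q, sq, qcount_eq x q]
end
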